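/- arXiv:1807.01161 — 5 statements merged into one kernel-verified Lean document; each statement's English description precedes it below -/
import Mathlib

section
/- Let H_r Λᵏ denote the space of differential k-forms on ℝ^{n+1} with homogeneous polynomial coefficients of degree r, and X = Σᵢ xᵢ ∂/∂xᵢ. Suppose (r, k) ≠ (0, 0). If α ∈ H_r Λᵏ satisfies i_X α = 0, then α = i_X((r+k)^{-1} dα); in particular α lies in i_X(H_{r−1} Λ^{k+1}). Hence the sequence H_{r+1}Λ^{k−1} ← H_r Λᵏ ← H_{r−1}Λ^{k+1} with maps i_X is exact at H_r Λᵏ. -/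
/-!
Evaluate `dα` at `x` on `(x, v₁, …, v_k)` by the coordinate formula. The term differentiating
along `x` is `r α(v)` by Euler's identity for homogeneous polynomials. Every other term
differentiates `α` along `v_j` with `x` in the first slot; differentiating the identity
`α_y(y, u) = 0` (that is, `i_X α = 0`) trades this for `-α_x(v_j, u)`, which after moving `v_j`
back into place is `α_x(v)`. So `i_X dα = (r + k) α` (Cartan's formula with `d i_X α = 0`), and
the coefficients of `dα`, being derivatives of homogeneous polynomials of degree `r`, are
homogeneous of degree `r - 1`.
-/

open scoped BigOperators
open Classical

namespace FEEC

variable {M : Type*} [AddCommGroup M] [Module ℝ M]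

/-- The wedge product of two real-valued alternating maps. -/
noncomputable def wedge {k l : ℕ} (α : M [⋀^Fin k]→ₗ[ℝ] ℝ) (β : M [⋀^Fin l]→ₗ[ℝ] ℝ) :
    M [⋀^Fin (k + l)]→ₗ[ℝ] ℝ :=
  (((TensorProduct.lid ℝ ℝ).toLinearMap).compAlternatingMap (α.domCoprod β)).domDomCongr
    finSumFinEquiv

/-- A linear functional, regarded as an alternating 1-form. -/
noncomputable def oneForm (θ : M →ₗ[ℝ] ℝ) : M [⋀^Fin 1]→ₗ[ℝ] ℝ :=
  AlternatingMap.ofSubsingleton ℝ M ℝ (0 : Fin 1) θ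

/-- Left exterior multiplication of a `k`-form by the 1-form `θ`. -/
noncomputable def lwedge {k : ℕ} (θ : M →ₗ[ℝ] ℝ) (α : M [⋀^Fin k]→ₗ[ℝ] ℝ) :
    M [⋀^Fin (k + 1)]→ₗ[ℝ] ℝ :=
  (wedge (oneForm θ) α).domDomCongr (finCongr (Nat.add_comm 1 k))

/-- Reinterpret a `k`-form as an `l`-form along an equality `k = l`. -/
noncomputable def castForm {k l : ℕ} (h : k = l) (α : M [⋀^Fin k]→ₗ[ℝ] ℝ) :
    M [⋀^Fin l]→ₗ[ℝ] ℝ :=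
  α.domDomCongr (finCongr h)

/-- The wedge product of a family of covectors, `θ₁ ∧ ⋯ ∧ θₖ`; its value on
`(v₁, …, v_k)` is `det (θᵢ (v_j))`. -/
noncomputable def covWedge {k : ℕ} (φ : Fin k → (M →ₗ[ℝ] ℝ)) : M [⋀^Fin k]→ₗ[ℝ] ℝ :=
  Matrix.detRowAlternating.compLinearMap (LinearMap.pi φ)

/-- Points of `ℝ^N`. -/
abbrev Vec (N : ℕ) := Fin N → ℝ

/-- A differential `k`-form on `ℝ^N`: an alternating-map-valued function. -/
abbrev Form (N k : ℕ) := Vec N → (Vec N [⋀^Fin k]→ₗ[ℝ] ℝ)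

/-- `s = x₁ + ⋯ + x_N`. -/
noncomputable def sFun (N : ℕ) (x : Vec N) : ℝ := ∑ i, x i

/-- The constant 1-form `ds = dx₁ + ⋯ + dx_N`. -/
noncomputable def ds (N : ℕ) : Vec N →ₗ[ℝ] ℝ := ∑ i, LinearMap.proj i

/-- The exterior derivative of a `k`-form at a point, characterized by the standard
coordinate-free formula `(dω)ₓ(v₀,…,v_k) = Σᵢ (-1)ⁱ (∂_{vᵢ} ω)(v₀,…,v̂ᵢ,…,v_k)`
(defined by definite description; junk value `0` if no alternating map satisfies it). -/
noncomputable def extDeriv {N k : ℕ} (ω : Form N k) (x : Vec N) :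
    Vec N [⋀^Fin (k + 1)]→ₗ[ℝ] ℝ :=
  if h : ∃ η : Vec N [⋀^Fin (k + 1)]→ₗ[ℝ] ℝ, ∀ v : Fin (k + 1) → Vec N,
      η v = ∑ i : Fin (k + 1),
        (-1 : ℝ) ^ (i : ℕ) * fderiv ℝ (fun y => ω y (fun j => v (i.succAbove j))) x (v i)
  then h.choose else 0

/-- Interior product with the Euler vector field `X = Σᵢ xᵢ ∂ᵢ` (which at the point `x`
is the vector `x` itself). -/
noncomputable def iEuler {N k : ℕ} (ω : Form N (k + 1)) : Form N k :=
  fun x => (ω x).curryLeft x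

/-- The Lie derivative along the Euler vector field, via Cartan's formula
`𝔏_X = d ∘ i_X + i_X ∘ d` (with `i_X = 0` on 0-forms). -/
noncomputable def lieX {N : ℕ} : ∀ {k : ℕ}, Form N k → Form N k
  | 0, ω => fun x => (extDeriv ω x).curryLeft x
  | (_ + 1), ω => fun x => extDeriv (iEuler ω) x + (extDeriv ω x).curryLeft x

/-- The modified exterior derivative `𝐝 = d − s⁻¹ ds ∧ 𝔏_X`. -/
noncomputable def bd {N k : ℕ} (ω : Form N k) : Form N (k + 1) :=
  fun x => extDeriv ω x - (sFun N x)⁻¹ • lwedge (ds N) (lieX ω x)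

/-- `ω` has coefficients that are homogeneous polynomials of degree `r`. -/
def HomPolyForm {N k : ℕ} (r : ℕ) (ω : Form N k) : Prop :=
  ∀ v : Fin k → Vec N, ∃ P : MvPolynomial (Fin N) ℝ,
    P.IsHomogeneous r ∧ ∀ x, MvPolynomial.eval x P = ω x v

/-- The inner product of two `k`-forms induced (via Gram determinants) by the diagonal
metric `⟨dxᵢ, dxᵢ⟩ = xᵢ` at the point `x`: explicitly
`⟨α, β⟩ = Σ_{i₁<⋯<i_k} x_{i₁}⋯x_{i_k} α(e_{i₁},…,e_{i_k}) β(e_{i₁},…,e_{i_k})`. -/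
noncomputable def gInner {N k : ℕ} (x : Vec N) (α β : Vec N [⋀^Fin k]→ₗ[ℝ] ℝ) : ℝ :=
  ∑ s : Finset (Fin N), if h : s.card = k then
    (∏ i ∈ s, x i) * α (fun j => Pi.single ((s.orderIsoOfFin h j : Fin N)) 1)
      * β (fun j => Pi.single ((s.orderIsoOfFin h j : Fin N)) 1)
  else 0

/-- The standard Euclidean volume form `dx₁ ∧ ⋯ ∧ dx_N`. -/
noncomputable def vol (N : ℕ) : Vec N [⋀^Fin N]→ₗ[ℝ] ℝ := Matrix.detRowAlternating

/-- The modified Hodge star `*_g` at the point `x`: the unique `l`-form `γ` with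
`α ∧ γ = ⟨α, β⟩_g vol` for all `k`-forms `α` (junk value `0` if none exists). -/
noncomputable def hodge {N k l : ℕ} (h : k + l = N) (x : Vec N)
    (β : Vec N [⋀^Fin k]→ₗ[ℝ] ℝ) : Vec N [⋀^Fin l]→ₗ[ℝ] ℝ :=
  if H : ∃ γ : Vec N [⋀^Fin l]→ₗ[ℝ] ℝ, ∀ α : Vec N [⋀^Fin k]→ₗ[ℝ] ℝ,
      castForm h (wedge α γ) = gInner x α β • vol N
  then H.choose else 0

/-- Pullback (restriction) of a `k`-form to the `i`-th coordinate hyperplane `{xᵢ = 0}`. -/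
noncomputable def faceRestrict {N k : ℕ} (i : Fin N) (α : Vec N [⋀^Fin k]→ₗ[ℝ] ℝ) :
    (LinearMap.ker (LinearMap.proj i : Vec N →ₗ[ℝ] ℝ)) [⋀^Fin k]→ₗ[ℝ] ℝ :=
  α.compLinearMap (LinearMap.ker (LinearMap.proj i : Vec N →ₗ[ℝ] ℝ)).subtype

end FEEC

namespace MvPolynomial

noncomputable def homogeneousFunctions (σ 𝕜 : Type*) [CommSemiring 𝕜] (n : ℕ) :
    Submodule 𝕜 ((σ → 𝕜) → 𝕜) :=
  (homogeneousSubmodule σ 𝕜 n).map (LinearMap.pi fun x => (aeval x).toLinearMap)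

theorem mem_homogeneousFunctions {σ 𝕜 : Type*} [CommSemiring 𝕜] {n : ℕ} {f : (σ → 𝕜) → 𝕜} :
    f ∈ homogeneousFunctions σ 𝕜 n ↔
      ∃ P : MvPolynomial σ 𝕜, P.IsHomogeneous n ∧ ∀ x, eval x P = f x := by
  simp only [homogeneousFunctions, Submodule.mem_map, mem_homogeneousSubmodule]
  exact exists_congr fun _ => and_congr_right fun _ => _root_.funext_iff

variable {σ : Type*} [Fintype σ]

theorem hasFDerivAt_eval (P : MvPolynomial σ ℝ) (x : σ → ℝ) :
    HasFDerivAt (fun y => eval y P)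
      (∑ i, eval x (pderiv i P) • (ContinuousLinearMap.proj i : (σ → ℝ) →L[ℝ] ℝ)) x := by
  classical
  induction P using MvPolynomial.induction_on with
  | C a => simpa using hasFDerivAt_const (E := σ → ℝ) a x
  | add p q hp hq =>
    simp only [map_add, add_smul, Finset.sum_add_distrib]
    exact hp.fun_add hq
  | mul_X p i hp =>
    simp only [eval_mul, eval_X]
    refine (hp.fun_mul (ContinuousLinearMap.proj i).hasFDerivAt).congr_fderiv ?_
    ext v
    simp [pderiv_X, Pi.single_apply, apply_ite (eval x), mul_add, Finset.sum_add_distrib,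
      Finset.mul_sum, mul_comm, mul_left_comm]

theorem fderiv_eval_apply (P : MvPolynomial σ ℝ) (x v : σ → ℝ) :
    fderiv ℝ (fun y => eval y P) x v = eval x (∑ i, C (v i) * pderiv i P) := by
  simp [(hasFDerivAt_eval P x).fderiv, mul_comm]

theorem IsHomogeneous.fderiv_eval_apply_self {P : MvPolynomial σ ℝ} {n : ℕ}
    (hP : P.IsHomogeneous n) (x : σ → ℝ) :
    fderiv ℝ (fun y => eval y P) x x = n * eval x P := by
  have euler := congrArg (eval x) hP.sum_X_mul_pderiv
  simp only [map_sum, map_mul, eval_X, map_nsmul] at euler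
  simpa [fderiv_eval_apply] using euler

theorem differentiable_of_mem_homogeneousFunctions {n : ℕ} {f : (σ → ℝ) → ℝ}
    (hf : f ∈ homogeneousFunctions σ ℝ n) : Differentiable ℝ f := by
  obtain ⟨P, -, hP⟩ := mem_homogeneousFunctions.mp hf
  rw [← _root_.funext hP]
  exact fun x => (hasFDerivAt_eval P x).differentiableAt

theorem fderiv_apply_self_of_mem_homogeneousFunctions {n : ℕ} {f : (σ → ℝ) → ℝ}
    (hf : f ∈ homogeneousFunctions σ ℝ n) (x : σ → ℝ) : fderiv ℝ f x x = n * f x := by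
  obtain ⟨P, hPn, hP⟩ := mem_homogeneousFunctions.mp hf
  rw [← _root_.funext hP, hPn.fderiv_eval_apply_self]

theorem fderiv_apply_mem_homogeneousFunctions {n : ℕ} {f : (σ → ℝ) → ℝ}
    (hf : f ∈ homogeneousFunctions σ ℝ n) (v : σ → ℝ) :
    (fun x => fderiv ℝ f x v) ∈ homogeneousFunctions σ ℝ (n - 1) := by
  obtain ⟨P, hPn, hP⟩ := mem_homogeneousFunctions.mp hf
  refine mem_homogeneousFunctions.mpr ⟨∑ i, C (v i) * pderiv i P, ?_, fun x => ?_⟩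
  · exact IsHomogeneous.sum _ _ _ fun i _ => hPn.pderiv.C_mul _
  · rw [← _root_.funext hP, fderiv_eval_apply]

end MvPolynomial

theorem fderiv_linearMap_apply_self {ι : Type*} [Fintype ι]
    {B : (ι → ℝ) → (ι → ℝ) →ₗ[ℝ] ℝ} {x : ι → ℝ}
    (hB : ∀ z, DifferentiableAt ℝ (fun y => B y z) x) (d : ι → ℝ) :
    fderiv ℝ (fun y => B y y) x d = fderiv ℝ (fun y => B y x) x d + B x d := by
  classical
  set g : ι → (ι → ℝ) → ℝ := fun i y => B y fun j => if i = j then 1 else 0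
  have hexpand : ∀ y z, B y z = ∑ i, z i * g i y := fun y z => (B y).pi_apply_eq_sum_univ z
  have hdiag : HasFDerivAt (fun y => B y y) (∑ i, (x i • fderiv ℝ (g i) x +
      g i x • (ContinuousLinearMap.proj i : (ι → ℝ) →L[ℝ] ℝ))) x := by
    simp only [hexpand]
    exact HasFDerivAt.fun_sum fun i _ =>
      (ContinuousLinearMap.proj i).hasFDerivAt.mul (hB _).hasFDerivAt
  have hfrozen : HasFDerivAt (fun y => B y x) (∑ i, x i • fderiv ℝ (g i) x) x := by
    simp only [hexpand]
    exact HasFDerivAt.fun_sum fun i _ => (hB _).hasFDerivAt.const_mul (x i)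
  rw [hdiag.fderiv, hfrozen.fderiv, hexpand x d]
  simp [Finset.sum_add_distrib, mul_comm]

namespace FEEC

open MvPolynomial

variable {N k r : ℕ}

theorem homPolyForm_iff {α : Form N k} :
    HomPolyForm r α ↔ ∀ v, (fun x => α x v) ∈ homogeneousFunctions (Fin N) ℝ r := by
  simp only [HomPolyForm, mem_homogeneousFunctions]

noncomputable def fderivForm (α : Form N k) (x : Vec N)
    (hα : ∀ v, DifferentiableAt ℝ (fun y => α y v) x) :
    Vec N →ₗ[ℝ] Vec N [⋀^Fin k]→ₗ[ℝ] ℝ where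
  toFun d :=
    { toFun := fun v => fderiv ℝ (fun y => α y v) x d
      map_update_add' := fun v i a b => by
        simp only [AlternatingMap.map_update_add]
        rw [fderiv_fun_add (hα _) (hα _)]
        rfl
      map_update_smul' := fun v i c a => by
        simp only [AlternatingMap.map_update_smul]
        rw [fderiv_fun_const_smul (hα _)]
        rfl
      map_eq_zero_of_eq' := fun v i j hv hij => by
        simp [AlternatingMap.map_eq_zero_of_eq _ v hv hij] }
  map_add' d e := by ext v; simp
  map_smul' c d := by ext v; simp

theorem extDeriv_apply_of_differentiableAt {α : Form N k} {x : Vec N}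
    (hα : ∀ v, DifferentiableAt ℝ (fun y => α y v) x) (v : Fin (k + 1) → Vec N) :
    extDeriv α x v = ∑ i : Fin (k + 1),
      (-1 : ℝ) ^ (i : ℕ) * fderiv ℝ (fun y => α y (i.removeNth v)) x (v i) := by
  have h : ∃ η : Vec N [⋀^Fin (k + 1)]→ₗ[ℝ] ℝ, ∀ v : Fin (k + 1) → Vec N,
      η v = ∑ i : Fin (k + 1),
        (-1 : ℝ) ^ (i : ℕ) * fderiv ℝ (fun y => α y (fun j => v (i.succAbove j))) x (v i) :=
    ⟨AlternatingMap.alternatizeUncurryFin (fderivForm α x hα), fun v => by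
      simp [AlternatingMap.alternatizeUncurryFin_apply, fderivForm]; rfl⟩
  rw [extDeriv, dif_pos h]
  exact h.choose_spec v

theorem HomPolyForm.differentiableAt {α : Form N k} (hα : HomPolyForm r α) (x : Vec N)
    (v : Fin k → Vec N) : DifferentiableAt ℝ (fun y => α y v) x :=
  differentiable_of_mem_homogeneousFunctions (homPolyForm_iff.mp hα v) x

theorem HomPolyForm.fderiv_apply_self {α : Form N k} (hα : HomPolyForm r α) (x : Vec N)
    (v : Fin k → Vec N) : fderiv ℝ (fun y => α y v) x x = r * α x v :=
  fderiv_apply_self_of_mem_homogeneousFunctions (homPolyForm_iff.mp hα v) x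

theorem HomPolyForm.extDeriv {α : Form N k} (hα : HomPolyForm r α) :
    HomPolyForm (r - 1) (FEEC.extDeriv α) := by
  refine homPolyForm_iff.mpr fun v => ?_
  have hcoeff : (fun x => FEEC.extDeriv α x v) = ∑ i : Fin (k + 1),
      (-1 : ℝ) ^ (i : ℕ) • fun x => fderiv ℝ (fun y => α y (i.removeNth v)) x (v i) := by
    ext x
    simp [extDeriv_apply_of_differentiableAt (hα.differentiableAt x)]
  rw [hcoeff]
  exact Submodule.sum_mem _ fun i _ => Submodule.smul_mem _ _
    (fderiv_apply_mem_homogeneousFunctions (homPolyForm_iff.mp hα _) _)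

theorem HomPolyForm.const_smul {α : Form N k} (hα : HomPolyForm r α) (c : ℝ) :
    HomPolyForm r (fun x => c • α x) :=
  homPolyForm_iff.mpr fun v => Submodule.smul_mem _ c (homPolyForm_iff.mp hα v)

theorem fderiv_apply_vecCons_of_iEuler_eq_zero {α : Form N (k + 1)} {x : Vec N}
    (hα : ∀ v, DifferentiableAt ℝ (fun y => α y v) x) (hX : iEuler α = 0)
    (u : Fin k → Vec N) (d : Vec N) :
    fderiv ℝ (fun y => α y (Matrix.vecCons x u)) x d = -α x (Matrix.vecCons d u) := by
  set B : Vec N → Vec N →ₗ[ℝ] ℝ :=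
    fun y => (α y).toMultilinearMap.toLinearMap (Matrix.vecCons 0 u) 0
  have hB : ∀ y z, B y z = α y (Matrix.vecCons z u) := fun y z => by
    simp [B, Matrix.vecCons, Fin.update_cons_zero]
  have hdiag := fderiv_linearMap_apply_self (B := B) (x := x) (fun z => by simpa [hB] using hα _) d
  have hzero : (fun y => B y y) = fun _ => 0 := funext fun y => by
    simpa [hB, iEuler] using AlternatingMap.congr_fun (congrFun hX y) u
  rw [hzero, fderiv_const_apply] at hdiag
  simp only [hB, zero_apply] at hdiag
  exact eq_neg_of_add_eq_zero_left hdiag.symm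

theorem extDeriv_apply_vecCons_self {α : Form N k} (hα : HomPolyForm r α)
    (hX : ∀ x, ∀ v : Fin k → Vec N, (∃ i, v i = x) → α x v = 0) (x : Vec N)
    (v : Fin k → Vec N) :
    extDeriv α x (Matrix.vecCons x v) = (r + k) * α x v := by
  rw [extDeriv_apply_of_differentiableAt (hα.differentiableAt x), Fin.sum_univ_succ]
  have hradial : (-1 : ℝ) ^ ((0 : Fin (k + 1)) : ℕ) * fderiv ℝ
      (fun y => α y ((0 : Fin (k + 1)).removeNth (Matrix.vecCons x v))) x
        (Matrix.vecCons x v 0) = r * α x v := by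
    simpa using hα.fderiv_apply_self x v
  rw [hradial]
  cases k with
  | zero => simp
  | succ K =>
    have hiEuler : iEuler α = 0 :=
      funext fun y => AlternatingMap.ext fun u => hX y _ ⟨0, rfl⟩
    have hterm : ∀ j : Fin (K + 1), (-1 : ℝ) ^ (j.succ : ℕ) * fderiv ℝ
        (fun y => α y (j.succ.removeNth (Matrix.vecCons x v))) x
          (Matrix.vecCons x v j.succ) = α x v := by
      intro j
      rw [show j.succ.removeNth (Matrix.vecCons x v) = Matrix.vecCons x (j.removeNth v) from
          Fin.cons_comp_succ_succAbove _ _ _, Matrix.cons_val_succ,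
        fderiv_apply_vecCons_of_iEuler_eq_zero (hα.differentiableAt x) hiEuler,
        ← AlternatingMap.neg_one_pow_smul_map_insertNth, Fin.insertNth_self_removeNth]
      rcases neg_one_pow_eq_or ℝ (j : ℕ) with h | h <;> simp [pow_succ, h]
    simp only [hterm, Finset.sum_const, Finset.card_univ, Fintype.card_fin, nsmul_eq_mul]
    push_cast
    ring

/-- If `(r, k) ≠ (0, 0)` and `α ∈ H_r Λᵏ` satisfies `i_X α = 0` (encoded: `α` vanishes on any
tuple of vectors one of which is the Euler vector `x`), then `α = i_X ((r+k)⁻¹ dα)`; in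
particular `α` lies in `i_X (H_{r-1} Λ^{k+1})`. -/
theorem stmt8 (n k r : ℕ) (hrk : (r, k) ≠ (0, 0)) (α : Form (n + 1) k)
    (hα : HomPolyForm r α)
    (h0 : ∀ x, ∀ v : Fin k → Vec (n + 1), (∃ i, v i = x) → α x v = 0) :
    (∀ x, α x = (((r : ℝ) + (k : ℝ))⁻¹ • extDeriv α x).curryLeft x)
    ∧ ∃ β : Form (n + 1) (k + 1), HomPolyForm (r - 1) β ∧ ∀ x, α x = (β x).curryLeft x := by
  have hrk₀ : (r : ℝ) + k ≠ 0 := by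
    have : r + k ≠ 0 := fun h => hrk (Prod.ext (by omega) (by omega))
    exact_mod_cast this
  have hcurry : ∀ x, α x = (((r : ℝ) + (k : ℝ))⁻¹ • extDeriv α x).curryLeft x := fun x => by
    ext v
    rw [AlternatingMap.curryLeft_apply_apply, AlternatingMap.smul_apply,
      extDeriv_apply_vecCons_self hα h0, smul_eq_mul, inv_mul_cancel_left₀ hrk₀]
  exact ⟨hcurry, _, hα.extDeriv.const_smul _, hcurry⟩

end FEEC
end

section
/- With 𝐝 = d − s^{-1} ds ∧ 𝔏_X and j_X the right interior product (j_X = (−1)ᵏ i_X on k-forms, i.e., insertion of X into the last slot), the operators 𝐝 and j_X commute: 𝐝(j_X α) = j_X(𝐝α) for all smooth forms α on the region s ≠ 0. -/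
open scoped BigOperators
open Classical

namespace FEEC

variable {M : Type*} [AddCommGroup M] [Module ℝ M]

/-! Auxiliary lemmas -/

section ShufflePerm

variable {k : ℕ}

/-- The index equivalence used in `lwedge`. -/
noncomputable def shufEquiv (k : ℕ) : (Fin 1 ⊕ Fin k) ≃ Fin (k + 1) :=
  finSumFinEquiv.trans (finCongr (Nat.add_comm 1 k))

lemma shufEquiv_inl (k : ℕ) (a : Fin 1) : shufEquiv k (Sum.inl a) = 0 := by
  apply Fin.ext
  have : (a : ℕ) = 0 := by omega
  simp [shufEquiv, this]

lemma shufEquiv_inr (k : ℕ) (j : Fin k) : shufEquiv k (Sum.inr j) = j.succ := by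
  apply Fin.ext
  simp [shufEquiv, Nat.add_comm]

/-- The `i`-th shuffle permutation. -/
noncomputable def shufPerm (i : Fin (k + 1)) : Equiv.Perm (Fin 1 ⊕ Fin k) :=
  ((shufEquiv k).trans i.cycleRange.symm).trans (shufEquiv k).symm

lemma shufPerm_inl (i : Fin (k + 1)) (a : Fin 1) :
    shufPerm i (Sum.inl a) = (shufEquiv k).symm i := by
  simp [shufPerm, shufEquiv_inl]

lemma shufPerm_inr (i : Fin (k + 1)) (j : Fin k) :
    shufPerm i (Sum.inr j) = (shufEquiv k).symm (i.succAbove j) := by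
  simp [shufPerm, shufEquiv_inr]

lemma sign_shufPerm (i : Fin (k + 1)) :
    Equiv.Perm.sign (shufPerm i) = (-1) ^ (i : ℕ) := by
  rw [shufPerm, Equiv.Perm.sign_trans_trans_symm, ← Equiv.Perm.inv_def,
    Equiv.Perm.sign_inv, Fin.sign_cycleRange]

lemma shufPerm_bijective (k : ℕ) :
    Function.Bijective (fun i : Fin (k + 1) =>
      (Quotient.mk'' (shufPerm i) : Equiv.Perm.ModSumCongr (Fin 1) (Fin k))) := by
  constructor
  · intro i j hij
    obtain ⟨⟨sl, sr⟩, h⟩ := QuotientGroup.leftRel_apply.mp (Quotient.exact' hij)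
    have h0 := DFunLike.congr_fun h (Sum.inl (0 : Fin 1))
    simp only [Equiv.Perm.sumCongrHom_apply, Equiv.Perm.sumCongr_apply, Sum.map_inl,
      Equiv.Perm.mul_apply] at h0
    have h1 : shufPerm i (Sum.inl (sl 0)) = shufPerm j (Sum.inl 0) := by
      rw [h0]; exact Equiv.apply_symm_apply _ _
    rw [shufPerm_inl, shufPerm_inl] at h1
    exact (shufEquiv k).symm.injective h1
  · intro q
    refine Quotient.inductionOn' q (fun σ => ?_)
    refine ⟨shufEquiv k (σ (Sum.inl 0)), Quotient.sound' ?_⟩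
    rw [QuotientGroup.leftRel_apply]
    apply Equiv.Perm.mem_sumCongrHom_range_of_perm_mapsTo_inl
    rintro _ ⟨a, rfl⟩
    have ha : a = 0 := Subsingleton.elim _ _
    have h2 : shufPerm (shufEquiv k (σ (Sum.inl 0))) (Sum.inl (0 : Fin 1))
        = σ (Sum.inl 0) := by
      rw [shufPerm_inl, Equiv.symm_apply_apply]
    subst ha
    show ((shufPerm (shufEquiv k (σ (Sum.inl 0))))⁻¹ * σ) (Sum.inl 0) ∈ Set.range Sum.inl
    rw [Equiv.Perm.mul_apply]
    have h3 : (shufPerm (shufEquiv k (σ (Sum.inl 0))))⁻¹ (σ (Sum.inl 0)) = Sum.inl 0 := by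
      rw [Equiv.Perm.inv_eq_iff_eq]; exact h2.symm
    rw [h3]
    exact ⟨0, rfl⟩

end ShufflePerm
section LwedgeApply

lemma lwedge_apply {k : ℕ} (θ : M →ₗ[ℝ] ℝ) (β : M [⋀^Fin k]→ₗ[ℝ] ℝ)
    (v : Fin (k + 1) → M) :
    lwedge θ β v
      = ∑ i : Fin (k + 1), (-1 : ℝ) ^ (i : ℕ) * (θ (v i) * β (fun j => v (i.succAbove j))) := by
  have hsum : lwedge θ β v = ∑ σ : Equiv.Perm.ModSumCongr (Fin 1) (Fin k),
      (TensorProduct.lid ℝ ℝ)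
        (AlternatingMap.domCoprod.summand (oneForm θ) β σ (fun q => v (shufEquiv k q))) := by
    rw [lwedge, AlternatingMap.domDomCongr_apply, wedge, AlternatingMap.domDomCongr_apply,
      LinearMap.compAlternatingMap_apply, AlternatingMap.domCoprod_apply,
      MultilinearMap.sum_apply, map_sum]
    rfl
  have hterm : ∀ i : Fin (k + 1),
      (-1 : ℝ) ^ (i : ℕ) * (θ (v i) * β (fun j => v (i.succAbove j)))
        = (TensorProduct.lid ℝ ℝ)
            (AlternatingMap.domCoprod.summand (oneForm θ) β (Quotient.mk'' (shufPerm i))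
              (fun q => v (shufEquiv k q))) := by
    intro i
    rw [AlternatingMap.domCoprod.summand_mk'', sign_shufPerm]
    rw [MultilinearMap.smul_apply, MultilinearMap.domDomCongr_apply,
      MultilinearMap.domCoprod_apply]
    have e2 : (fun j => v (shufEquiv k (shufPerm i (Sum.inr j))))
        = fun j => v (i.succAbove j) := by
      funext j; rw [shufPerm_inr, Equiv.apply_symm_apply]
    simp only [AlternatingMap.coe_multilinearMap]
    rw [e2]
    have e3 : (oneForm θ) (fun p => v (shufEquiv k (shufPerm i (Sum.inl p)))) = θ (v i) := by
      have h4 : (fun p : Fin 1 => v (shufEquiv k (shufPerm i (Sum.inl p)))) = fun _ => v i := by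
        funext p; rw [shufPerm_inl, Equiv.apply_symm_apply]
      rw [h4]
      rfl
    rw [Units.smul_def, ← Int.cast_smul_eq_zsmul ℝ, map_smul, e3,
      TensorProduct.lid_tmul, smul_eq_mul, smul_eq_mul]
    push_cast
    ring
  rw [hsum]
  exact (Finset.sum_bij
    (g := fun σ => (TensorProduct.lid ℝ ℝ)
      (AlternatingMap.domCoprod.summand (oneForm θ) β σ (fun q => v (shufEquiv k q))))
    (fun (i : Fin (k + 1)) _ => (Quotient.mk'' (shufPerm i) :
      Equiv.Perm.ModSumCongr (Fin 1) (Fin k)))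
    (fun a _ => Finset.mem_univ _)
    (fun a _ b _ h => (shufPerm_bijective k).1 h)
    (fun q _ => ⟨((shufPerm_bijective k).2 q).choose, Finset.mem_univ _,
      ((shufPerm_bijective k).2 q).choose_spec⟩)
    (fun i _ => hterm i)).symm

end LwedgeApply
section KeyIdentities

lemma curryLeft_lwedge {k : ℕ} (θ : M →ₗ[ℝ] ℝ) (β : M [⋀^Fin (k + 1)]→ₗ[ℝ] ℝ) (x : M) :
    (lwedge θ β).curryLeft x = θ x • β - lwedge θ (β.curryLeft x) := by
  ext v
  rw [AlternatingMap.curryLeft_apply_apply, AlternatingMap.sub_apply,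
    AlternatingMap.smul_apply, lwedge_apply, Fin.sum_univ_succ]
  have h0 : (-1 : ℝ) ^ ((0 : Fin (k + 2)) : ℕ)
      * (θ (Matrix.vecCons x v 0) * β (fun j => Matrix.vecCons x v ((0 : Fin (k+2)).succAbove j)))
      = θ x * β v := by
    simp [Fin.succAbove_zero]
  rw [h0, lwedge_apply]
  have h1 : ∀ i : Fin (k + 1),
      (-1 : ℝ) ^ ((i.succ : Fin (k + 2)) : ℕ)
        * (θ (Matrix.vecCons x v i.succ)
            * β (fun j => Matrix.vecCons x v (i.succ.succAbove j)))
      = -((-1 : ℝ) ^ (i : ℕ)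
        * (θ (v i) * (β.curryLeft x) (fun j => v (i.succAbove j)))) := by
    intro i
    have hβ : (fun j => Matrix.vecCons x v (i.succ.succAbove j))
        = Matrix.vecCons x (fun j => v (i.succAbove j)) := by
      funext j
      refine Fin.cases ?_ (fun j' => ?_) j
      · simp
      · simp [Fin.succ_succAbove_succ]
    rw [hβ, AlternatingMap.curryLeft_apply_apply, Fin.val_succ, Matrix.cons_val_succ]
    ring
  rw [Finset.sum_congr rfl (fun i _ => h1 i), Finset.sum_neg_distrib]
  rw [smul_eq_mul]
  ring

lemma lwedge_smul {k : ℕ} (θ : M →ₗ[ℝ] ℝ) (c : ℝ) (β : M [⋀^Fin k]→ₗ[ℝ] ℝ) :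
    lwedge θ (c • β) = c • lwedge θ β := by
  ext v
  rw [AlternatingMap.smul_apply, lwedge_apply, lwedge_apply, smul_eq_mul, Finset.mul_sum]
  refine Finset.sum_congr rfl (fun i _ => ?_)
  rw [AlternatingMap.smul_apply, smul_eq_mul]
  ring

end KeyIdentities

section ExtDerivLemmas

lemma extDeriv_unique {N k : ℕ} {ω : Form N k} {x : Vec N}
    {η : Vec N [⋀^Fin (k + 1)]→ₗ[ℝ] ℝ}
    (hη : ∀ v : Fin (k + 1) → Vec N,
      η v = ∑ i : Fin (k + 1),
        (-1 : ℝ) ^ (i : ℕ) * fderiv ℝ (fun y => ω y (fun j => v (i.succAbove j))) x (v i)) :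
    extDeriv ω x = η := by
  have h : ∃ η' : Vec N [⋀^Fin (k + 1)]→ₗ[ℝ] ℝ, ∀ v : Fin (k + 1) → Vec N,
      η' v = ∑ i : Fin (k + 1),
        (-1 : ℝ) ^ (i : ℕ) * fderiv ℝ (fun y => ω y (fun j => v (i.succAbove j))) x (v i) :=
    ⟨η, hη⟩
  rw [extDeriv, dif_pos h]
  ext v
  rw [h.choose_spec v, hη v]

lemma extDeriv_zeroForm {N k : ℕ} (x : Vec N) :
    extDeriv (fun _ : Vec N => (0 : Vec N [⋀^Fin k]→ₗ[ℝ] ℝ)) x = 0 := by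
  apply extDeriv_unique
  intro v
  simp

lemma fderiv_const_smul'' {N : ℕ} (c : ℝ) (hc : c ≠ 0) (f : Vec N → ℝ) (x : Vec N) :
    fderiv ℝ (fun y => c • f y) x = c • fderiv ℝ f x := by
  by_cases h : DifferentiableAt ℝ f x
  · exact fderiv_fun_const_smul h c
  · have h2 : ¬ DifferentiableAt ℝ (fun y => c • f y) x := by
      intro h2
      have h3 := h2.const_smul c⁻¹
      simp only [Pi.smul_def, smul_smul, inv_mul_cancel₀ hc, one_smul] at h3
      exact h h3
    rw [fderiv_zero_of_not_differentiableAt h, fderiv_zero_of_not_differentiableAt h2, smul_zero]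

lemma extDeriv_smul {N k : ℕ} (c : ℝ) (hc : c ≠ 0) (ω : Form N k) (x : Vec N) :
    extDeriv (fun y => c • ω y) x = c • extDeriv ω x := by
  have hfun : ∀ (v : Fin (k + 1) → Vec N) (i : Fin (k + 1)),
      (fun y => (c • ω y) (fun j => v (i.succAbove j)))
        = fun y => c • (ω y (fun j => v (i.succAbove j))) := by
    intro v i; funext y; rw [AlternatingMap.smul_apply]
  by_cases H : ∃ η : Vec N [⋀^Fin (k + 1)]→ₗ[ℝ] ℝ, ∀ v : Fin (k + 1) → Vec N,
      η v = ∑ i : Fin (k + 1),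
        (-1 : ℝ) ^ (i : ℕ) * fderiv ℝ (fun y => ω y (fun j => v (i.succAbove j))) x (v i)
  · have hspec : ∀ v : Fin (k + 1) → Vec N,
        extDeriv ω x v = ∑ i : Fin (k + 1),
          (-1 : ℝ) ^ (i : ℕ) * fderiv ℝ (fun y => ω y (fun j => v (i.succAbove j))) x (v i) := by
      intro v
      rw [extDeriv, dif_pos H]
      exact H.choose_spec v
    apply extDeriv_unique
    intro v
    rw [AlternatingMap.smul_apply, hspec v, smul_eq_mul, Finset.mul_sum]
    refine Finset.sum_congr rfl (fun i _ => ?_)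
    rw [hfun v i, fderiv_const_smul'' c hc]
    simp only [ContinuousLinearMap.coe_smul', Pi.smul_apply, smul_eq_mul]
    ring
  · have H2 : ¬ ∃ η : Vec N [⋀^Fin (k + 1)]→ₗ[ℝ] ℝ, ∀ v : Fin (k + 1) → Vec N,
        η v = ∑ i : Fin (k + 1),
          (-1 : ℝ) ^ (i : ℕ)
            * fderiv ℝ (fun y => (c • ω y) (fun j => v (i.succAbove j))) x (v i) := by
      rintro ⟨η, hη⟩
      refine H ⟨c⁻¹ • η, fun v => ?_⟩
      rw [AlternatingMap.smul_apply, hη v, smul_eq_mul, Finset.mul_sum]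
      refine Finset.sum_congr rfl (fun i _ => ?_)
      rw [hfun v i, fderiv_const_smul'' c hc]
      simp only [ContinuousLinearMap.coe_smul', Pi.smul_apply, smul_eq_mul]
      field_simp
    rw [extDeriv, dif_neg H2, extDeriv, dif_neg H, smul_zero]

end ExtDerivLemmas

lemma ds_eq_sFun (N : ℕ) (x : Vec N) : ds N x = sFun N x := by
  simp [ds, sFun]
section Main

lemma curryLeft_sub' {n : ℕ} (f g : M [⋀^Fin (n + 1)]→ₗ[ℝ] ℝ) (m : M) :
    (f - g).curryLeft m = f.curryLeft m - g.curryLeft m := by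
  ext v
  simp [AlternatingMap.curryLeft_apply_apply, AlternatingMap.sub_apply]

lemma curryLeft_smul' {n : ℕ} (c : ℝ) (f : M [⋀^Fin (n + 1)]→ₗ[ℝ] ℝ) (m : M) :
    (c • f).curryLeft m = c • f.curryLeft m := by
  ext v
  simp [AlternatingMap.curryLeft_apply_apply, AlternatingMap.smul_apply]

lemma curryLeft_add' {n : ℕ} (f g : M [⋀^Fin (n + 1)]→ₗ[ℝ] ℝ) (m : M) :
    (f + g).curryLeft m = f.curryLeft m + g.curryLeft m := by
  ext v
  simp [AlternatingMap.curryLeft_apply_apply, AlternatingMap.add_apply]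

lemma lieX_curry_smul {N k : ℕ} (ω : Form N (k + 1)) (x : Vec N) :
    lieX (fun y => (-1 : ℝ) ^ k • (ω y).curryLeft y) x
      = (-1 : ℝ) ^ k • ((extDeriv (iEuler ω) x).curryLeft x) := by
  cases k with
  | zero =>
      show (extDeriv (fun y => ((-1 : ℝ) ^ 0) • (ω y).curryLeft y) x).curryLeft x = _
      have hrepr : (fun y => ((-1 : ℝ) ^ 0) • (ω y).curryLeft y)
          = (fun y => ((-1 : ℝ) ^ 0) • iEuler ω y) := rfl
      rw [hrepr, extDeriv_smul _ (pow_ne_zero _ (by norm_num)) (iEuler ω) x, curryLeft_smul']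
  | succ m =>
      show extDeriv (iEuler (fun y => ((-1 : ℝ) ^ (m + 1)) • (ω y).curryLeft y)) x
          + (extDeriv (fun y => ((-1 : ℝ) ^ (m + 1)) • (ω y).curryLeft y) x).curryLeft x = _
      have h0 : iEuler (fun y => ((-1 : ℝ) ^ (m + 1)) • (ω y).curryLeft y)
          = (fun _ => (0 : Vec N [⋀^Fin m]→ₗ[ℝ] ℝ)) := by
        funext y
        show (((-1 : ℝ) ^ (m + 1)) • (ω y).curryLeft y).curryLeft y = 0
        rw [curryLeft_smul', AlternatingMap.curryLeft_same, smul_zero]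
      have hrepr : (fun y => ((-1 : ℝ) ^ (m + 1)) • (ω y).curryLeft y)
          = (fun y => ((-1 : ℝ) ^ (m + 1)) • iEuler ω y) := rfl
      rw [h0, extDeriv_zeroForm, hrepr,
        extDeriv_smul _ (pow_ne_zero _ (by norm_num)) (iEuler ω) x, zero_add, curryLeft_smul']

end Main

/-- `𝐝 = d − s⁻¹ ds ∧ 𝔏_X` commutes with the right interior product `j_X = (−1)ᵏ i_X`
(insertion of the Euler vector field into the last slot), on smooth forms on `{s ≠ 0}`:
`𝐝(j_X ω) = j_X (𝐝 ω)`. -/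
theorem stmt13 (n k : ℕ) (ω : Form (n + 1) (k + 1))
    (hω : ∀ v : Fin (k + 1) → Vec (n + 1),
      ContDiffOn ℝ (⊤ : ℕ∞) (fun x => ω x v) {x | sFun (n + 1) x ≠ 0})
    (x : Vec (n + 1)) (hx : sFun (n + 1) x ≠ 0) :
    bd (fun y => (-1 : ℝ) ^ k • (ω y).curryLeft y) x
      = (-1 : ℝ) ^ (k + 1) • (bd ω x).curryLeft x := by
  have hc' : ((-1 : ℝ) ^ k) ≠ 0 := pow_ne_zero _ (by norm_num)
  have hRHS : (bd ω x).curryLeft x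
      = (extDeriv ω x).curryLeft x
        - (sFun (n + 1) x)⁻¹ •
            (sFun (n + 1) x •
                (extDeriv (iEuler ω) x + (extDeriv ω x).curryLeft x)
              - lwedge (ds (n + 1)) ((extDeriv (iEuler ω) x).curryLeft x)) := by
    show (extDeriv ω x
        - (sFun (n + 1) x)⁻¹ • lwedge (ds (n + 1)) (lieX ω x)).curryLeft x = _
    rw [curryLeft_sub', curryLeft_smul']
    have hlie : lieX ω x = extDeriv (iEuler ω) x + (extDeriv ω x).curryLeft x := rfl
    rw [hlie, curryLeft_lwedge, ds_eq_sFun, curryLeft_add',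
      AlternatingMap.curryLeft_same, add_zero]
  show extDeriv (fun y => (-1 : ℝ) ^ k • (ω y).curryLeft y) x
      - (sFun (n + 1) x)⁻¹ •
          lwedge (ds (n + 1)) (lieX (fun y => (-1 : ℝ) ^ k • (ω y).curryLeft y) x)
    = (-1 : ℝ) ^ (k + 1) • (bd ω x).curryLeft x
  have hrepr : (fun y => ((-1 : ℝ) ^ k) • (ω y).curryLeft y)
      = (fun y => ((-1 : ℝ) ^ k) • iEuler ω y) := rfl
  rw [lieX_curry_smul ω x, hrepr, extDeriv_smul _ hc' (iEuler ω) x, lwedge_smul, hRHS]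
  have h1 : (sFun (n + 1) x)⁻¹ •
      (sFun (n + 1) x • (extDeriv (iEuler ω) x + (extDeriv ω x).curryLeft x)
        - lwedge (ds (n + 1)) ((extDeriv (iEuler ω) x).curryLeft x))
      = (extDeriv (iEuler ω) x + (extDeriv ω x).curryLeft x)
        - (sFun (n + 1) x)⁻¹ •
            lwedge (ds (n + 1)) ((extDeriv (iEuler ω) x).curryLeft x) := by
    rw [smul_sub, smul_smul, inv_mul_cancel₀ hx, one_smul]
  rw [h1, pow_succ]
  module

end FEEC
end

section
/- With g and *_g as above: for any k-form β on the closed orthant and any boundary face Γᵢ = {xᵢ = 0}, the pullback of *_g β to Γᵢ is zero. That is, *_g always produces forms with vanishing tangential trace on the boundary of the orthant. -/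
open scoped BigOperators
open Classical

namespace FEEC

variable {M : Type*} [AddCommGroup M] [Module ℝ M]

open Equiv in
lemma wedge_eval {k l : ℕ} (α : M [⋀^Fin k]→ₗ[ℝ] ℝ) (γ : M [⋀^Fin l]→ₗ[ℝ] ℝ)
    (w : Fin (k + l) → M)
    (hα : ∀ u : Fin k → M, (∃ b j, u b = w (Fin.natAdd k j)) → α u = 0) :
    wedge α γ w = α (fun b => w (Fin.castAdd l b)) * γ (fun j => w (Fin.natAdd k j)) := by
  classical
  rw [wedge, AlternatingMap.domDomCongr_apply, LinearMap.compAlternatingMap_apply]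
  set v : (Fin k ⊕ Fin l) → M := w ∘ finSumFinEquiv with hv
  have hco : (α.domCoprod γ) v = ∑ σ : Equiv.Perm.ModSumCongr (Fin k) (Fin l),
      AlternatingMap.domCoprod.summand α γ σ v := by
    rw [← MultilinearMap.sum_apply]
    exact DFunLike.congr_fun (AlternatingMap.domCoprod_coe α γ) v
  rw [hco, map_sum]
  have key : ∀ σ' : Equiv.Perm.ModSumCongr (Fin k) (Fin l),
      (TensorProduct.lid ℝ ℝ) (AlternatingMap.domCoprod.summand α γ σ' v)
        = if σ' = Quotient.mk'' 1 then
            (α fun b => w (Fin.castAdd l b)) * γ (fun j => w (Fin.natAdd k j)) else 0 := by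
    intro σ'
    by_cases hc : σ' = Quotient.mk'' 1
    · rw [if_pos hc, hc]
      rw [AlternatingMap.domCoprod.summand_mk'']
      simp only [MultilinearMap.smul_apply, MultilinearMap.domDomCongr_apply,
        MultilinearMap.domCoprod_apply, AlternatingMap.coe_multilinearMap, map_one, one_smul,
        Equiv.Perm.coe_one, id_eq, map_smul]
      have h1 : (fun i => v (Sum.inl i)) = fun b => w (Fin.castAdd l b) := by
        funext b; simp [hv, finSumFinEquiv_apply_left]
      have h2 : (fun i => v (Sum.inr i)) = fun j => w (Fin.natAdd k j) := by
        funext j; simp [hv, finSumFinEquiv_apply_right]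
      rw [h1, h2]
      simp [TensorProduct.lid_tmul, smul_eq_mul]
    · rw [if_neg hc]
      revert hc
      induction σ' using Quotient.inductionOn' with
      | h σ =>
        intro hne
        by_cases hall : ∀ b : Fin k, ∃ b', σ (Sum.inl b) = Sum.inl b'
        · exfalso
          apply hne
          -- σ is a sumCongr, so its class is the identity class
          choose p hp using hall
          have hpinj : Function.Injective p := by
            intro a b hab
            have : σ (Sum.inl a) = σ (Sum.inl b) := by rw [hp, hp, hab]
            exact Sum.inl_injective (σ.injective this)
          have hpbij : Function.Bijective p := Finite.injective_iff_bijective.mp hpinj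
          have hq : ∀ j : Fin l, ∃ j', σ (Sum.inr j) = Sum.inr j' := by
            intro j
            rcases hsj : σ (Sum.inr j) with b' | j'
            · exfalso
              obtain ⟨b, hb⟩ := hpbij.surjective b'
              have : σ (Sum.inr j) = σ (Sum.inl b) := by rw [hsj, hp, hb]
              exact Sum.inl_ne_inr (σ.injective this).symm
            · exact ⟨j', rfl⟩
          choose q hqq using hq
          have hqinj : Function.Injective q := by
            intro a b hab
            have : σ (Sum.inr a) = σ (Sum.inr b) := by rw [hqq, hqq, hab]
            exact Sum.inr_injective (σ.injective this)
          have hqbij : Function.Bijective q := Finite.injective_iff_bijective.mp hqinj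
          have hσ : σ = Equiv.Perm.sumCongrHom (Fin k) (Fin l)
              (Equiv.ofBijective p hpbij, Equiv.ofBijective q hqbij) := by
            ext z
            rcases z with b | j
            · simp [Equiv.Perm.sumCongrHom, hp]
            · simp [Equiv.Perm.sumCongrHom, hqq]
          refine Quotient.sound' ?_
          rw [QuotientGroup.leftRel_apply]
          exact ⟨(Equiv.ofBijective p hpbij, Equiv.ofBijective q hqbij)⁻¹,
            by rw [map_inv, ← hσ, mul_one]⟩
        · push_neg at hall
          obtain ⟨b, hb⟩ := hall
          have hbr : ∃ j, σ (Sum.inl b) = Sum.inr j := by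
            rcases hsb : σ (Sum.inl b) with b' | j
            · exact absurd hsb (hb b')
            · exact ⟨j, rfl⟩
          obtain ⟨j, hj⟩ := hbr
          rw [AlternatingMap.domCoprod.summand_mk'']
          simp only [MultilinearMap.smul_apply, MultilinearMap.domDomCongr_apply,
            MultilinearMap.domCoprod_apply, AlternatingMap.coe_multilinearMap]
          have hz : α (fun i => v (σ (Sum.inl i))) = 0 := by
            apply hα
            exact ⟨b, j, by rw [hj]; simp [hv, finSumFinEquiv_apply_right]⟩
          rw [hz, TensorProduct.zero_tmul, smul_zero]; exact LinearEquiv.map_zero _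

  calc (∑ σ' : Equiv.Perm.ModSumCongr (Fin k) (Fin l),
        (TensorProduct.lid ℝ ℝ) (AlternatingMap.domCoprod.summand α γ σ' v))
      = ∑ σ' : Equiv.Perm.ModSumCongr (Fin k) (Fin l), (if σ' = Quotient.mk'' 1 then
            (α fun b => w (Fin.castAdd l b)) * γ (fun j => w (Fin.natAdd k j)) else 0) :=
        Finset.sum_congr rfl (fun σ' _ => key σ')
    _ = _ := by rw [Finset.sum_ite_eq' Finset.univ]; simp


lemma covWedge_apply {k : ℕ} (φ : Fin k → (M →ₗ[ℝ] ℝ)) (u : Fin k → M) :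
    covWedge φ u = Matrix.det (Matrix.of (fun b a => φ a (u b))) := rfl

lemma key {N k l : ℕ} (h : k + l = N) (x : Vec N) (i : Fin N) (hxi : x i = 0)
    (β : Vec N [⋀^Fin k]→ₗ[ℝ] ℝ) (γ : Vec N [⋀^Fin l]→ₗ[ℝ] ℝ)
    (Hγ : ∀ α : Vec N [⋀^Fin k]→ₗ[ℝ] ℝ,
      castForm h (wedge α γ) = gInner x α β • vol N) :
    faceRestrict i γ = 0 := by
  classical
  have hbase : ∀ c : Fin l → Fin N, (∀ j, c j ≠ i) →
      γ (fun j => Pi.single (c j) 1) = 0 := by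
    intro c hc
    by_cases hcinj : Function.Injective c
    · -- main case
      set S := Finset.image c Finset.univ with hS
      have hScard : S.card = l := by
        rw [hS, Finset.card_image_of_injective _ hcinj, Finset.card_univ, Fintype.card_fin]
      have hiS : i ∉ S := by
        simp only [hS, Finset.mem_image]
        rintro ⟨j, -, hj⟩
        exact hc j hj
      have hk : k ≠ 0 := by
        intro hk0
        have hsub : S ⊆ Finset.univ.erase i := by
          intro m hm
          refine Finset.mem_erase.mpr ⟨?_, Finset.mem_univ _⟩
          rintro rfl; exact hiS hm
        have := Finset.card_le_card hsub
        rw [hScard, Finset.card_erase_of_mem (Finset.mem_univ _), Finset.card_univ,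
          Fintype.card_fin] at this
        have hN : 1 ≤ N := Fin.pos i
        omega
      obtain ⟨k', rfl⟩ := Nat.exists_eq_succ_of_ne_zero hk
      set T := (Finset.univ \ insert i S) with hT
      have hTcard : T.card = k' := by
        rw [hT, Finset.card_sdiff_of_subset (Finset.subset_univ _),
          Finset.card_insert_of_notMem hiS, hScard, Finset.card_univ, Fintype.card_fin]
        omega
      set τ : Fin k' → Fin N := fun a => (T.orderIsoOfFin hTcard a : Fin N) with hτ
      have hτT : ∀ a, τ a ∈ T := fun a => (T.orderIsoOfFin hTcard a).2
      have hτi : ∀ a, τ a ≠ i := by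
        intro a
        have := hτT a
        rw [hT, Finset.mem_sdiff] at this
        intro hh; exact this.2 (by rw [hh]; exact Finset.mem_insert_self _ _)
      have hτS : ∀ a, τ a ∉ S := by
        intro a
        have := hτT a
        rw [hT, Finset.mem_sdiff] at this
        intro hh; exact this.2 (Finset.mem_insert_of_mem hh)
      have hτinj : Function.Injective τ := fun a b hab =>
        (T.orderIsoOfFin hTcard).injective (Subtype.ext hab)
      set E : Fin N → Vec N := fun m => Pi.single m 1 with hE
      set φ : Fin (k' + 1) → (Vec N →ₗ[ℝ] ℝ) :=
        Fin.cons (LinearMap.proj i) (fun a => LinearMap.proj (τ a)) with hφ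
      set w : Fin ((k' + 1) + l) → Vec N :=
        Fin.append (Fin.cons (E i) (fun a => E (τ a))) (fun j => E (c j)) with hw
      have hEs : ∀ (m m' : Fin N), (LinearMap.proj m : Vec N →ₗ[ℝ] ℝ) (E m')
          = if m' = m then 1 else 0 := by
        intro m m'
        rw [LinearMap.proj_apply, hE]
        simp [Pi.single_apply, eq_comm]
      -- gInner vanishes
      have hg : gInner x (covWedge φ) β = 0 := by
        rw [gInner]
        apply Finset.sum_eq_zero
        intro s _
        split
        · rename_i hcard
          by_cases his : i ∈ s
          · rw [Finset.prod_eq_zero his hxi, zero_mul, zero_mul]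
          · have hα0 : covWedge φ
                (fun j => Pi.single ((s.orderIsoOfFin hcard j : Fin N)) 1) = 0 := by
              rw [covWedge_apply]
              apply Matrix.det_eq_zero_of_column_eq_zero 0
              intro b
              rw [Matrix.of_apply]
              have : φ 0 = LinearMap.proj i := rfl
              rw [this]
              have hne : ((s.orderIsoOfFin hcard b : Fin N)) ≠ i := by
                intro hh; exact his (hh ▸ (s.orderIsoOfFin hcard b).2)
              rw [show (Pi.single ((s.orderIsoOfFin hcard b : Fin N)) 1 : Vec N)
                = E ((s.orderIsoOfFin hcard b : Fin N)) from rfl, hEs, if_neg hne]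
            rw [hα0, mul_zero, zero_mul]
        · rfl
      -- hypothesis for wedge_eval
      have hαW : ∀ u : Fin (k' + 1) → Vec N,
          (∃ b j', u b = w (Fin.natAdd (k' + 1) j')) → covWedge φ u = 0 := by
        rintro u ⟨b, j', hbj⟩
        rw [covWedge_apply]
        apply Matrix.det_eq_zero_of_row_eq_zero b
        intro a
        rw [Matrix.of_apply, hbj, hw, Fin.append_right]
        refine Fin.cases ?_ ?_ a
        · have : φ 0 = LinearMap.proj i := rfl
          rw [this, hEs, if_neg (hc j')]
        · intro a'
          have : φ a'.succ = LinearMap.proj (τ a') := rfl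
          rw [this, hEs, if_neg]
          intro hh
          exact hτS a' (hh ▸ Finset.mem_image_of_mem c (Finset.mem_univ j'))
      -- the determinant is 1 on the first block
      have hα1 : covWedge φ (fun a => w (Fin.castAdd l a)) = 1 := by
        rw [covWedge_apply]
        have hone : Matrix.of (fun b a => φ a (w (Fin.castAdd l b))) = 1 := by
          ext b a
          rw [Matrix.of_apply, Matrix.one_apply, hw, Fin.append_left]
          refine Fin.cases ?_ (fun b' => ?_) b
          · rw [Fin.cons_zero]
            refine Fin.cases ?_ (fun a' => ?_) a
            · rw [show φ 0 = LinearMap.proj i from rfl, hEs, if_pos rfl, if_pos rfl]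
            · rw [show φ a'.succ = LinearMap.proj (τ a') from rfl, hEs,
                if_neg (fun hh => hτi a' hh.symm), if_neg (Fin.succ_ne_zero a').symm]
          · rw [Fin.cons_succ]
            refine Fin.cases ?_ (fun a' => ?_) a
            · rw [show φ 0 = LinearMap.proj i from rfl, hEs, if_neg (hτi b'),
                if_neg (Fin.succ_ne_zero b')]
            · rw [show φ a'.succ = LinearMap.proj (τ a') from rfl, hEs]
              by_cases hba : b' = a'
              · rw [if_pos (by rw [hba]), if_pos (by rw [hba])]
              · rw [if_neg (fun hh => hba (hτinj hh)),
                  if_neg (fun hh => hba (Fin.succ_injective _ hh))]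
        rw [hone, Matrix.det_one]
      -- wedge vanishes
      have h0 : wedge (covWedge φ) γ w = 0 := by
        have hcf := Hγ (covWedge φ)
        rw [hg, zero_smul] at hcf
        have : wedge (covWedge φ) γ w
            = castForm h (wedge (covWedge φ) γ) (w ∘ (finCongr h).symm) := by
          rw [castForm, AlternatingMap.domDomCongr_apply]
          exact congrArg _ (funext fun b => by simp [Function.comp])
        rw [this, hcf]
        rfl
      have hW := wedge_eval (covWedge φ) γ w hαW
      rw [h0, hα1, one_mul] at hW
      have : (fun j => w (Fin.natAdd (k' + 1) j)) = fun j => Pi.single (c j) (1 : ℝ) := by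
        funext j
        rw [hw, Fin.append_right]
      rw [this] at hW
      exact hW.symm
    · -- not injective
      apply AlternatingMap.map_eq_zero_of_not_injective
      intro hinj
      apply hcinj
      intro a b hab
      apply hinj
      simp only []
      rw [hab]
  -- reduce to the basis case by multilinearity
  ext v
  rw [AlternatingMap.zero_apply, faceRestrict, AlternatingMap.compLinearMap_apply]
  set E : Fin N → Vec N := fun m => Pi.single m 1 with hE
  set v' : Fin l → Vec N := fun j => ((Submodule.subtype _) (v j) : Vec N) with hv'
  have hv'i : ∀ j, v' j i = 0 := by
    intro j
    have := (v j).2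
    rw [LinearMap.mem_ker] at this
    exact this
  have hexp : ∀ j, v' j = ∑ m ∈ Finset.univ.erase i, (v' j m) • E m := by
    intro j
    funext t
    rw [Finset.sum_apply]
    simp only [Pi.smul_apply, hE, Pi.single_apply, smul_eq_mul, mul_ite, mul_one, mul_zero]
    rw [Finset.sum_ite_eq (Finset.univ.erase i) t (fun m => v' j m)]
    by_cases ht : t = i
    · rw [if_neg (by simp [ht]), ht, hv'i]
    · rw [if_pos (Finset.mem_erase.mpr ⟨ht, Finset.mem_univ _⟩)]
  have : γ v' = γ (fun j => ∑ m ∈ Finset.univ.erase i, (v' j m) • E m) := by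
    congr 1
    funext j
    exact hexp j
  rw [this]
  have hms := γ.toMultilinearMap.map_sum_finset (fun j m => (v' j m) • E m)
    (fun _ => Finset.univ.erase i)
  rw [show γ (fun j => ∑ m ∈ Finset.univ.erase i, (v' j m) • E m)
    = γ.toMultilinearMap (fun j => ∑ m ∈ Finset.univ.erase i, (v' j m) • E m) from rfl, hms]
  apply Finset.sum_eq_zero
  intro r hr
  have hrne : ∀ j, r j ≠ i := by
    intro j
    have := Fintype.mem_piFinset.mp hr j
    exact (Finset.mem_erase.mp this).1
  rw [show (γ.toMultilinearMap fun j => v' j (r j) • E (r j))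
    = γ (fun j => v' j (r j) • E (r j)) from rfl]
  have := γ.toMultilinearMap.map_smul_univ (fun j => v' j (r j)) (fun j => E (r j))
  rw [show γ (fun j => v' j (r j) • E (r j))
    = γ.toMultilinearMap (fun j => v' j (r j) • E (r j)) from rfl, this,
    show γ.toMultilinearMap (fun j => E (r j)) = γ (fun j => Pi.single (r j) 1) from rfl,
    hbase r hrne, smul_zero]

/-- For any `k`-form `β` on the closed orthant and any boundary face `Γᵢ = {xᵢ = 0}`, the
pullback of `*_g β` to `Γᵢ` vanishes (at every point of the face in the closed orthant). -/
theorem stmt16 (n k l : ℕ) (h : k + l = n + 1) (β : Form (n + 1) k)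
    (x : Vec (n + 1)) (hx : ∀ j, 0 ≤ x j) (i : Fin (n + 1)) (hxi : x i = 0) :
    faceRestrict i (hodge h x (β x)) = 0 := by
  rw [hodge]
  split
  · rename_i H
    exact key h x i hxi (β x) H.choose H.choose_spec
  · ext v
    simp [faceRestrict]

end FEEC
end

section
/- With g and *_g as above: if β is a k-form on the closed orthant whose pullback to every boundary face Γᵢ = {xᵢ = 0} vanishes, then *_g β vanishes identically (all components, not just tangential ones) at every boundary point of the orthant. -/
open scoped BigOperators
open Classical

namespace FEEC

variable {M : Type*} [AddCommGroup M] [Module ℝ M]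

/-!
Let `x` lie on the face `Γᵢ`. Every term of `⟨α, β⟩_g` at `x` either carries the weight `xᵢ = 0`
or evaluates `β` on coordinate vectors tangent to `Γᵢ`, where `β` vanishes; so `⟨α, β⟩_g = 0`
for all `α`. The defining identity `α ∧ *_g β = ⟨α, β⟩_g vol` then makes `*_g β` wedge to zero
against every `k`-form, and the wedge pairing `Λᵏ × Λˡ → Λᵏ⁺ˡ` is nondegenerate.
-/

/-- Every shuffle except the trivial one contributes zero. -/
theorem _root_.AlternatingMap.domCoprod_apply_eq_tmul_of_forall
    {ιa ιb R E N₁ N₂ : Type*} [Fintype ιa] [Fintype ιb] [DecidableEq ιa] [DecidableEq ιb]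
    [CommSemiring R] [AddCommGroup N₁] [Module R N₁] [AddCommGroup N₂] [Module R N₂]
    [AddCommMonoid E] [Module R E]
    (a : E [⋀^ιa]→ₗ[R] N₁) (b : E [⋀^ιb]→ₗ[R] N₂) (v : ιa ⊕ ιb → E)
    (ha : ∀ σ : Equiv.Perm (ιa ⊕ ιb), ¬ Set.MapsTo σ (Set.range Sum.inl) (Set.range Sum.inl) →
      a (fun i => v (σ (Sum.inl i))) = 0) :
    a.domCoprod b v = a (v ∘ Sum.inl) ⊗ₜ b (v ∘ Sum.inr) := by
  rw [AlternatingMap.domCoprod_apply, _root_.sum_apply]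
  refine (Finset.sum_eq_single_of_mem (Quotient.mk'' 1) (Finset.mem_univ _) fun c _ hc => ?_).trans
    (by simp [AlternatingMap.domCoprod.summand_mk'', Function.comp_def])
  induction c using Quotient.inductionOn' with
  | h σ =>
    have hσ : ¬ Set.MapsTo σ (Set.range Sum.inl) (Set.range Sum.inl) := fun hmaps => hc <| by
      refine Quotient.sound' (QuotientGroup.leftRel_apply.mpr ?_)
      simpa using (Equiv.Perm.sumCongrHom ιa ιb).range.inv_mem
        (Equiv.Perm.mem_sumCongrHom_range_of_perm_mapsTo_inl hmaps)
    simp [AlternatingMap.domCoprod.summand_mk'', ha σ hσ]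

theorem castForm_wedge_apply {k l N : ℕ} (h : k + l = N) (α : M [⋀^Fin k]→ₗ[ℝ] ℝ)
    (γ : M [⋀^Fin l]→ₗ[ℝ] ℝ) (w : Fin k ⊕ Fin l → M) :
    castForm h (wedge α γ) (fun p => w (finSumFinEquiv.symm (finCongr h.symm p))) =
      TensorProduct.lid ℝ ℝ (α.domCoprod γ w) := by
  simp only [castForm, wedge, AlternatingMap.domDomCongr_apply,
    LinearMap.compAlternatingMap_apply, LinearEquiv.coe_coe]
  congr 2 with s
  simp

theorem covWedge_proj_single_eq_zero {N k : ℕ} (u m : Fin k → Fin N) {i₀ : Fin k}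
    (h : ∀ j, u j ≠ m i₀) :
    covWedge (fun i => (LinearMap.proj (u i) : Vec N →ₗ[ℝ] ℝ))
      (fun i => Pi.single (m i) 1) = 0 :=
  Matrix.det_eq_zero_of_row_eq_zero i₀ fun j => by simp [h j]

theorem covWedge_proj_single_self {N k : ℕ} {u : Fin k → Fin N} (hu : Function.Injective u) :
    covWedge (fun i => (LinearMap.proj (u i) : Vec N →ₗ[ℝ] ℝ))
      (fun i => Pi.single (u i) 1) = 1 := by
  have hI : (Matrix.of fun i j => (LinearMap.proj (u j) : Vec N →ₗ[ℝ] ℝ) (Pi.single (u i) 1)) =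
      (1 : Matrix (Fin k) (Fin k) ℝ) := by
    ext i j
    simp [Pi.single_apply, Matrix.one_apply, hu.eq_iff, eq_comm]
  exact (congrArg Matrix.det hI).trans Matrix.det_one

theorem exists_injective_ne_of_add_eq {N k l : ℕ} (h : k + l = N) {v : Fin l → Fin N}
    (hv : Function.Injective v) : ∃ u : Fin k → Fin N, Function.Injective u ∧ ∀ i j, u i ≠ v j := by
  set S := (Finset.univ.image v)ᶜ
  have hS : S.card = k := by
    rw [Finset.card_compl, Finset.card_image_of_injective _ hv]
    simp only [Fintype.card_fin, Finset.card_univ]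
    omega
  refine ⟨fun i => S.orderIsoOfFin hS i, fun a b hab => (S.orderIsoOfFin hS).injective
    (Subtype.ext hab), fun i j hij => ?_⟩
  have hmem := (S.orderIsoOfFin hS i).2
  simp [S, hij] at hmem

/-- On `e_{v₁}, …, e_{v_l}` the form `γ` is detected by `dx_{u₁} ∧ ⋯ ∧ dx_{u_k}`, where `u`
enumerates the complementary coordinates. -/
theorem eq_zero_of_forall_castForm_wedge_eq_zero {N k l : ℕ} (h : k + l = N)
    {γ : Vec N [⋀^Fin l]→ₗ[ℝ] ℝ} (hγ : ∀ α : Vec N [⋀^Fin k]→ₗ[ℝ] ℝ, castForm h (wedge α γ) = 0) :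
    γ = 0 := by
  refine Module.Basis.ext_alternating (Pi.basisFun ℝ (Fin N)) fun v hv => ?_
  obtain ⟨u, hu, huv⟩ := exists_injective_ne_of_add_eq h hv
  set w : Fin k ⊕ Fin l → Vec N := fun s => Pi.single (Sum.elim u v s) 1
  have key := castForm_wedge_apply h (covWedge fun i => LinearMap.proj (u i)) γ w
  rw [hγ, AlternatingMap.domCoprod_apply_eq_tmul_of_forall] at key
  · simpa [w, Function.comp_def, covWedge_proj_single_self hu] using key.symm
  · intro σ hσ
    obtain ⟨i₀, j₀, hσi₀⟩ : ∃ i₀ j₀, σ (Sum.inl i₀) = Sum.inr j₀ := by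
      simp only [Set.MapsTo, Set.mem_range, not_forall] at hσ
      obtain ⟨_, ⟨i₀, rfl⟩, hnot⟩ := hσ
      cases hs : σ (Sum.inl i₀) with
      | inl i => exact absurd ⟨i, hs.symm⟩ hnot
      | inr j => exact ⟨i₀, j, hs⟩
    exact covWedge_proj_single_eq_zero u _ (i₀ := i₀) fun j => by simpa [hσi₀] using huv j j₀

theorem gInner_eq_zero_of_faceRestrict_eq_zero {N k : ℕ} {x : Vec N} {i : Fin N} (hxi : x i = 0)
    {β : Vec N [⋀^Fin k]→ₗ[ℝ] ℝ} (hβ : faceRestrict i β = 0) (α : Vec N [⋀^Fin k]→ₗ[ℝ] ℝ) :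
    gInner x α β = 0 := by
  refine Finset.sum_eq_zero fun s _ => ?_
  split_ifs with hs
  · by_cases hi : i ∈ s
    · rw [Finset.prod_eq_zero hi hxi, zero_mul, zero_mul]
    · have htangent : ∀ j, (Pi.single (s.orderIsoOfFin hs j : Fin N) (1 : ℝ) : Vec N) ∈
          LinearMap.ker (LinearMap.proj i : Vec N →ₗ[ℝ] ℝ) := fun j => by
        have hne : i ≠ s.orderIsoOfFin hs j := fun hij => hi (hij ▸ (s.orderIsoOfFin hs j).2)
        simpa [Pi.single_apply] using hne
      have hβs : β (fun j => Pi.single (s.orderIsoOfFin hs j : Fin N) 1) = 0 :=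
        (AlternatingMap.congr_fun hβ fun j => ⟨_, htangent j⟩ :)
      rw [hβs, mul_zero]
  · rfl

theorem hodge_eq_zero_of_forall_gInner_eq_zero {N k l : ℕ} (h : k + l = N) {x : Vec N}
    {β : Vec N [⋀^Fin k]→ₗ[ℝ] ℝ} (hβ : ∀ α, gInner x α β = 0) : hodge h x β = 0 := by
  unfold hodge
  split_ifs with H
  · exact eq_zero_of_forall_castForm_wedge_eq_zero h fun α => by
      rw [H.choose_spec α, hβ, zero_smul]
  · rfl

/-- If the pullback of the `k`-form `β` to every boundary face `Γᵢ = {xᵢ = 0}` of the closed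
orthant vanishes, then `*_g β` vanishes identically (all components) at every boundary point
of the orthant. -/
theorem stmt17 (n k l : ℕ) (h : k + l = n + 1) (β : Form (n + 1) k)
    (hβ : ∀ i : Fin (n + 1), ∀ x : Vec (n + 1), (∀ j, 0 ≤ x j) → x i = 0 →
      faceRestrict i (β x) = 0)
    (x : Vec (n + 1)) (hx : ∀ j, 0 ≤ x j) (hbx : ∃ i, x i = 0) :
    hodge h x (β x) = 0 := by
  obtain ⟨i, hxi⟩ := hbx
  exact hodge_eq_zero_of_forall_gInner_eq_zero h
    (gInner_eq_zero_of_faceRestrict_eq_zero hxi (hβ i x hx hxi))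

end FEEC
end

section
/- The modified Hodge star *_g maps the space H_r Λᵏ of k-forms with homogeneous polynomial coefficients of degree r isomorphically onto the space H̊_{r+k} Λ^{n+1−k} of (n+1−k)-forms with homogeneous polynomial coefficients of degree r+k whose tangential trace on the boundary of the orthant vanishes. In particular, every homogeneous polynomial form with vanishing boundary trace equals *_g of a polynomial form. -/
/-!
In the basis `dx_S` (`S` ranging over `k`-subsets), the defining identity `α ∧ *_g β = ⟨α, β⟩_g vol`
forces `*_g dx_S = ± x^S dx_{Sᶜ}`, where `x^S = ∏_{i ∈ S} xᵢ` and the sign is that of the shuffle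
`S ⊔ Sᶜ`: only complementary basis forms pair nontrivially under `∧`. So the coefficient of
`dx_{Sᶜ}` in `*_g β` is `± x^S β_S`, homogeneous of degree `r + k` and zero where some `xᵢ`,
`i ∈ S`, vanishes; as `dx_{Sᶜ}` restricts to zero on the faces `{xᵢ = 0}`, `i ∉ S`, the trace
vanishes on every face. Conversely, if `η` has vanishing traces, its `dx_{Sᶜ}`-coefficient vanishes
on `{xᵢ = 0}` for `i ∈ S`, hence is divisible by `x^S` (distinct `Xᵢ` are non-associated primes);
the degree-`r` part of the quotient is the preimage coefficient. Injectivity is cancellation of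
`x^S`.
-/


open scoped BigOperators
open Classical

namespace FEEC

variable {M : Type*} [AddCommGroup M] [Module ℝ M]

abbrev KSubset (N k : ℕ) := {s : Finset (Fin N) // s.card = k}

lemma alternatingMap_sum_apply {R M N ι α : Type*} [Semiring R] [AddCommMonoid M] [Module R M]
    [AddCommMonoid N] [Module R N] (s : Finset α) (f : α → M [⋀^ι]→ₗ[R] N) (v : ι → M) :
    (∑ a ∈ s, f a) v = ∑ a ∈ s, f a v :=
  map_sum (⟨⟨fun g => g v, rfl⟩, fun _ _ => rfl⟩ : (M [⋀^ι]→ₗ[R] N) →+ N) f s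

section Basis

variable {N k : ℕ}

noncomputable def basisTuple (S : KSubset N k) : Fin k → Vec N :=
  fun j => Pi.single (S.1.orderEmbOfFin S.2 j) 1

noncomputable def dx (S : KSubset N k) : Vec N [⋀^Fin k]→ₗ[ℝ] ℝ :=
  covWedge fun j => LinearMap.proj (S.1.orderEmbOfFin S.2 j)

lemma basisTuple_apply_of_notMem {S : KSubset N k} {i : Fin N} (hi : i ∉ S.1) (j : Fin k) :
    basisTuple S j i = 0 :=
  Pi.single_eq_of_ne (fun h => hi (by rw [h]; exact S.1.orderEmbOfFin_mem S.2 j)) 1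

lemma dx_apply_eq_zero_of_mem {T : KSubset N k} {i : Fin N} (hi : i ∈ T.1) (u : Fin k → Vec N)
    (hu : ∀ j, u j i = 0) : dx T u = 0 := by
  obtain ⟨j, rfl⟩ : i ∈ Set.range (T.1.orderEmbOfFin T.2) := by
    rwa [Finset.range_orderEmbOfFin]
  exact Matrix.det_eq_zero_of_column_eq_zero j fun i' => hu i'

lemma dx_apply_basisTuple (S T : KSubset N k) :
    dx T (basisTuple S) = if S = T then 1 else 0 := by
  split_ifs with hST
  · subst hST
    have hid : (Matrix.of fun i j => basisTuple S i (S.1.orderEmbOfFin S.2 j)) = 1 := by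
      ext i j
      simp [basisTuple, Matrix.one_apply, Pi.single_apply, eq_comm]
    change Matrix.det (Matrix.of fun i j => basisTuple S i (S.1.orderEmbOfFin S.2 j)) = 1
    rw [hid, Matrix.det_one]
  · have hTS : ¬T.1 ⊆ S.1 := fun hTS =>
      hST (Subtype.ext (Finset.eq_of_subset_of_card_le hTS (by rw [S.2, T.2])).symm)
    obtain ⟨i, hiT, hiS⟩ := Finset.not_subset.mp hTS
    exact dx_apply_eq_zero_of_mem hiT _ (basisTuple_apply_of_notMem hiS)

lemma sum_smul_dx_apply_basisTuple (c : KSubset N k → ℝ) (S : KSubset N k) :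
    (∑ T, c T • dx T) (basisTuple S) = c S := by
  simp [alternatingMap_sum_apply, dx_apply_basisTuple]

lemma exists_basisTuple_comp_perm (v : Fin k → Fin N) (hv : Function.Injective v) :
    ∃ (S : KSubset N k) (σ : Equiv.Perm (Fin k)),
      (fun i => (Pi.single (v i) 1 : Vec N)) = basisTuple S ∘ σ := by
  let S : KSubset N k :=
    ⟨Finset.univ.image v, by rw [Finset.card_image_of_injective _ hv, Finset.card_fin]⟩
  have hmem : ∀ i, v i ∈ Set.range (S.1.orderEmbOfFin S.2) := fun i => by
    rw [Finset.range_orderEmbOfFin]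
    exact Finset.mem_image_of_mem v (Finset.mem_univ i)
  choose f hf using hmem
  have hf_inj : Function.Injective f := fun a b hab => hv (by rw [← hf a, ← hf b, hab])
  exact ⟨S, Equiv.ofBijective f hf_inj.bijective_of_finite, funext fun i => by simp [basisTuple, hf]⟩

lemma ext_basisTuple {α β : Vec N [⋀^Fin k]→ₗ[ℝ] ℝ}
    (h : ∀ S : KSubset N k, α (basisTuple S) = β (basisTuple S)) : α = β := by
  refine Module.Basis.ext_alternating (Pi.basisFun ℝ (Fin N)) fun v hv => ?_
  obtain ⟨S, σ, hS⟩ := exists_basisTuple_comp_perm v hv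
  simp only [Pi.basisFun_apply, hS, AlternatingMap.map_perm, h]

lemma eq_smul_vol (f : Vec N [⋀^Fin N]→ₗ[ℝ] ℝ) : f = f (Pi.basisFun ℝ (Fin N)) • vol N := by
  rw [vol, ← Pi.basisFun_det]
  exact f.eq_smul_basis_det _

end Basis

section Shuffle

variable {N k l : ℕ}

noncomputable def complEquiv (hkl : k + l = N) : KSubset N k ≃ KSubset N l where
  toFun S := ⟨S.1ᶜ, by rw [Finset.card_compl, S.2, Fintype.card_fin]; omega⟩
  invFun T := ⟨T.1ᶜ, by rw [Finset.card_compl, T.2, Fintype.card_fin]; omega⟩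
  left_inv S := by simp
  right_inv T := by simp

@[simp]
lemma coe_complEquiv (hkl : k + l = N) (S : KSubset N k) : (complEquiv hkl S).1 = S.1ᶜ := rfl

/-- The order-preserving enumeration of `S` followed by that of its complement. -/
noncomputable def splitEquiv (hkl : k + l = N) (S : KSubset N k) : Fin k ⊕ Fin l ≃ Fin N :=
  ((S.1.orderIsoOfFin S.2).toEquiv.sumCongr
      (((complEquiv hkl S).1.orderIsoOfFin (complEquiv hkl S).2).toEquiv.trans
        (Equiv.subtypeEquivRight fun _ => Finset.mem_compl))).trans
    (Equiv.sumCompl (· ∈ S.1))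

lemma splitEquiv_inl (hkl : k + l = N) (S : KSubset N k) (i : Fin k) :
    splitEquiv hkl S (.inl i) = S.1.orderEmbOfFin S.2 i := by
  simp [splitEquiv]

lemma splitEquiv_inr (hkl : k + l = N) (S : KSubset N k) (j : Fin l) :
    splitEquiv hkl S (.inr j) = (complEquiv hkl S).1.orderEmbOfFin (complEquiv hkl S).2 j :=
  Finset.coe_orderIsoOfFin_apply _ _ j

lemma splitEquiv_inl_mem (hkl : k + l = N) (S : KSubset N k) (i : Fin k) :
    splitEquiv hkl S (.inl i) ∈ S.1 := by
  rw [splitEquiv_inl]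
  exact S.1.orderEmbOfFin_mem S.2 i

lemma splitEquiv_inr_notMem (hkl : k + l = N) (S : KSubset N k) (j : Fin l) :
    splitEquiv hkl S (.inr j) ∉ S.1 := by
  rw [splitEquiv_inr, ← Finset.mem_compl, ← coe_complEquiv hkl]
  exact Finset.orderEmbOfFin_mem _ _ j

/-- The `(k, l)`-shuffle placing the first `k` slots of `Fin (k + l) = Fin N` on `S`. -/
noncomputable def shuffle (hkl : k + l = N) (S : KSubset N k) : Equiv.Perm (Fin k ⊕ Fin l) :=
  (splitEquiv hkl S).trans (finSumFinEquiv.trans (finCongr hkl)).symm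

noncomputable def shuffleSign (hkl : k + l = N) (S : KSubset N k) : ℝ :=
  ((Equiv.Perm.sign (shuffle hkl S) : ℤ) : ℝ)

lemma shuffleSign_mul_self (hkl : k + l = N) (S : KSubset N k) :
    shuffleSign hkl S * shuffleSign hkl S = 1 := by
  rw [shuffleSign, ← Int.cast_mul, ← Units.val_mul, Int.units_mul_self, Units.val_one, Int.cast_one]

lemma shuffleSign_ne_zero (hkl : k + l = N) (S : KSubset N k) : shuffleSign hkl S ≠ 0 :=
  left_ne_zero_of_mul_eq_one (shuffleSign_mul_self hkl S)

lemma finCongr_finSumFinEquiv_shuffle (hkl : k + l = N) (S : KSubset N k) (z : Fin k ⊕ Fin l) :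
    finCongr hkl (finSumFinEquiv (shuffle hkl S z)) = splitEquiv hkl S z := by
  simp [shuffle]

lemma mk_shuffle_eq_iff (hkl : k + l = N) (S : KSubset N k) (σ : Equiv.Perm (Fin k ⊕ Fin l)) :
    (Quotient.mk'' (shuffle hkl S) : Equiv.Perm.ModSumCongr (Fin k) (Fin l)) = Quotient.mk'' σ ↔
      ∀ i, finCongr hkl (finSumFinEquiv (σ (.inl i))) ∈ S.1 := by
  rw [Quotient.eq'', QuotientGroup.leftRel_apply]
  constructor
  · rintro ⟨⟨a, b⟩, hab⟩ i
    have hσ : σ = shuffle hkl S * Equiv.Perm.sumCongrHom _ _ (a, b) := by rw [hab]; group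
    rw [hσ, Equiv.Perm.mul_apply, Equiv.Perm.sumCongrHom_apply, Equiv.Perm.sumCongr_apply,
      Sum.map_inl, finCongr_finSumFinEquiv_shuffle]
    exact splitEquiv_inl_mem hkl S _
  · refine fun h => Equiv.Perm.mem_sumCongrHom_range_of_perm_mapsTo_inl ?_
    rintro _ ⟨i, rfl⟩
    rcases hz : (shuffle hkl S)⁻¹ (σ (.inl i)) with i' | j
    · exact ⟨i', hz.symm⟩
    · refine absurd (h i) ?_
      rw [Equiv.Perm.inv_eq_iff_eq] at hz
      rw [hz, finCongr_finSumFinEquiv_shuffle]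
      exact splitEquiv_inr_notMem hkl S j

lemma bijective_mk_shuffle (hkl : k + l = N) :
    Function.Bijective fun S : KSubset N k =>
      (Quotient.mk'' (shuffle hkl S) : Equiv.Perm.ModSumCongr (Fin k) (Fin l)) := by
  refine ⟨fun S T hST => ?_, fun q => ?_⟩
  · have hTS : T.1 ⊆ S.1 := by
      intro a ha
      obtain ⟨i, rfl⟩ : a ∈ Set.range (T.1.orderEmbOfFin T.2) := by
        rwa [Finset.range_orderEmbOfFin]
      have hi := (mk_shuffle_eq_iff hkl S _).mp hST i
      rwa [finCongr_finSumFinEquiv_shuffle, splitEquiv_inl] at hi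
    exact (Subtype.ext (Finset.eq_of_subset_of_card_le hTS (by rw [S.2, T.2]))).symm
  · induction q using Quotient.inductionOn' with
    | h σ =>
      let f := fun i => finCongr hkl (finSumFinEquiv (σ (.inl i)))
      have hinj : Function.Injective f := fun a b hab => by simpa [f] using hab
      refine ⟨⟨Finset.univ.image f, by rw [Finset.card_image_of_injective _ hinj, Finset.card_fin]⟩,
        (mk_shuffle_eq_iff hkl _ σ).mpr fun i => Finset.mem_image_of_mem _ (Finset.mem_univ i)⟩

end Shuffle

section Wedge

variable {N k l : ℕ}

lemma single_splitEquiv_inl (hkl : k + l = N) (S : KSubset N k) :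
    (fun i => (Pi.single (splitEquiv hkl S (.inl i)) 1 : Vec N)) = basisTuple S := by
  funext i
  rw [splitEquiv_inl]
  rfl

lemma single_splitEquiv_inr (hkl : k + l = N) (S : KSubset N k) :
    (fun j => (Pi.single (splitEquiv hkl S (.inr j)) 1 : Vec N)) =
      basisTuple (complEquiv hkl S) := by
  funext j
  rw [splitEquiv_inr]
  rfl

/-- The terms of the shuffle sum defining `α ∧ γ` are indexed by `k`-subsets via `shuffle`. -/
lemma castForm_wedge_apply_basisFun (hkl : k + l = N) (α : Vec N [⋀^Fin k]→ₗ[ℝ] ℝ)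
    (γ : Vec N [⋀^Fin l]→ₗ[ℝ] ℝ) :
    castForm hkl (wedge α γ) (Pi.basisFun ℝ (Fin N)) =
      ∑ S, shuffleSign hkl S * (α (basisTuple S) * γ (basisTuple (complEquiv hkl S))) := by
  change TensorProduct.lid ℝ ℝ ((α.domCoprod γ)
    fun z => Pi.basisFun ℝ (Fin N) (finCongr hkl (finSumFinEquiv z))) = _
  rw [AlternatingMap.domCoprod_apply, sum_apply, map_sum]
  refine (Fintype.sum_bijective _ (bijective_mk_shuffle hkl) _ _ fun S => ?_).symm
  rw [AlternatingMap.domCoprod.summand_mk'', smul_apply,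
    MultilinearMap.domDomCongr_apply, MultilinearMap.domCoprod_apply]
  simp only [AlternatingMap.coe_multilinearMap, finCongr_finSumFinEquiv_shuffle, Pi.basisFun_apply,
    single_splitEquiv_inl, single_splitEquiv_inr, shuffleSign, Units.smul_def]
  rw [map_zsmul, TensorProduct.lid_tmul, smul_eq_mul, zsmul_eq_mul]

lemma castForm_wedge_dx_apply_basisFun (hkl : k + l = N) (S : KSubset N k)
    (γ : Vec N [⋀^Fin l]→ₗ[ℝ] ℝ) :
    castForm hkl (wedge (dx S) γ) (Pi.basisFun ℝ (Fin N)) =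
      shuffleSign hkl S * γ (basisTuple (complEquiv hkl S)) := by
  simp [castForm_wedge_apply_basisFun, dx_apply_basisTuple]

lemma eq_of_forall_castForm_wedge_eq (hkl : k + l = N) {γ γ' : Vec N [⋀^Fin l]→ₗ[ℝ] ℝ}
    (h : ∀ α : Vec N [⋀^Fin k]→ₗ[ℝ] ℝ, castForm hkl (wedge α γ) = castForm hkl (wedge α γ')) :
    γ = γ' := by
  refine ext_basisTuple fun T => ?_
  obtain ⟨S, rfl⟩ := (complEquiv hkl).surjective T
  have hS := DFunLike.congr_fun (h (dx S)) ⇑(Pi.basisFun ℝ (Fin N))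
  rw [castForm_wedge_dx_apply_basisFun, castForm_wedge_dx_apply_basisFun] at hS
  exact mul_left_cancel₀ (shuffleSign_ne_zero hkl S) hS

end Wedge

section Hodge

variable {N k l : ℕ}

lemma gInner_eq_sum (x : Vec N) (α β : Vec N [⋀^Fin k]→ₗ[ℝ] ℝ) :
    gInner x α β = ∑ S : KSubset N k, (∏ i ∈ S.1, x i) * α (basisTuple S) * β (basisTuple S) := by
  rw [gInner, ← Fintype.sum_subtype_add_sum_subtype (·.card = k)]
  exact (congrArg₂ (· + ·) (Finset.sum_congr rfl fun S _ => dif_pos S.2)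
    (Fintype.sum_eq_zero _ fun S => dif_neg S.2)).trans (add_zero _)

noncomputable def starCoeff (hkl : k + l = N) (x : Vec N) (β : Vec N [⋀^Fin k]→ₗ[ℝ] ℝ)
    (S : KSubset N k) : ℝ :=
  shuffleSign hkl S * ((∏ i ∈ S.1, x i) * β (basisTuple S))

/-- The closed form of `*_g`: it sends `dx_S` to `± x^S dx_{Sᶜ}`. -/
noncomputable def starFormula (hkl : k + l = N) (x : Vec N) (β : Vec N [⋀^Fin k]→ₗ[ℝ] ℝ) :
    Vec N [⋀^Fin l]→ₗ[ℝ] ℝ :=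
  ∑ T, starCoeff hkl x β ((complEquiv hkl).symm T) • dx T

lemma starFormula_apply_basisTuple (hkl : k + l = N) (x : Vec N)
    (β : Vec N [⋀^Fin k]→ₗ[ℝ] ℝ) (S : KSubset N k) :
    starFormula hkl x β (basisTuple (complEquiv hkl S)) = starCoeff hkl x β S := by
  rw [starFormula, sum_smul_dx_apply_basisTuple, Equiv.symm_apply_apply]

lemma castForm_wedge_starFormula (hkl : k + l = N) (x : Vec N)
    (α β : Vec N [⋀^Fin k]→ₗ[ℝ] ℝ) :
    castForm hkl (wedge α (starFormula hkl x β)) = gInner x α β • vol N := by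
  rw [eq_smul_vol (castForm hkl _), castForm_wedge_apply_basisFun, gInner_eq_sum]
  congr 1
  refine Finset.sum_congr rfl fun S _ => ?_
  rw [starFormula_apply_basisTuple, starCoeff]
  linear_combination (∏ i ∈ S.1, x i) * α (basisTuple S) * β (basisTuple S) *
    shuffleSign_mul_self hkl S

lemma hodge_eq_starFormula (hkl : k + l = N) (x : Vec N) (β : Vec N [⋀^Fin k]→ₗ[ℝ] ℝ) :
    hodge hkl x β = starFormula hkl x β := by
  have H : ∃ γ : Vec N [⋀^Fin l]→ₗ[ℝ] ℝ, ∀ α : Vec N [⋀^Fin k]→ₗ[ℝ] ℝ,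
      castForm hkl (wedge α γ) = gInner x α β • vol N :=
    ⟨starFormula hkl x β, fun α => castForm_wedge_starFormula hkl x α β⟩
  rw [hodge, dif_pos H]
  exact eq_of_forall_castForm_wedge_eq hkl fun α =>
    (H.choose_spec α).trans (castForm_wedge_starFormula hkl x α β).symm

lemma hodge_apply_basisTuple (hkl : k + l = N) (x : Vec N)
    (β : Vec N [⋀^Fin k]→ₗ[ℝ] ℝ) (S : KSubset N k) :
    hodge hkl x β (basisTuple (complEquiv hkl S)) = starCoeff hkl x β S := by
  rw [hodge_eq_starFormula, starFormula_apply_basisTuple]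

lemma faceRestrict_hodge_eq_zero (hkl : k + l = N) (x : Vec N) (β : Vec N [⋀^Fin k]→ₗ[ℝ] ℝ)
    (i : Fin N) (hx : x i = 0) : faceRestrict i (hodge hkl x β) = 0 := by
  ext u
  rw [hodge_eq_starFormula, starFormula, faceRestrict, AlternatingMap.compLinearMap_apply,
    alternatingMap_sum_apply, AlternatingMap.zero_apply]
  refine Finset.sum_eq_zero fun T _ => ?_
  obtain ⟨S, rfl⟩ := (complEquiv hkl).surjective T
  rw [AlternatingMap.smul_apply, smul_eq_mul, Equiv.symm_apply_apply]
  by_cases hi : i ∈ S.1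
  · rw [starCoeff, Finset.prod_eq_zero hi hx, zero_mul, mul_zero, zero_mul]
  · exact mul_eq_zero_of_right _
      (dx_apply_eq_zero_of_mem (Finset.mem_compl.mpr hi) _ fun j => (u j).2)

end Hodge

section Polynomial

open MvPolynomial

variable {σ R : Type*}

lemma exists_eq_X_mul_add_eval_update [CommSemiring R] [DecidableEq σ] (i : σ)
    (P : MvPolynomial σ R) :
    ∃ Q P₀ : MvPolynomial σ R, P = X i * Q + P₀ ∧
      ∀ x, eval x P₀ = eval (Function.update x i 0) P := by
  induction P using MvPolynomial.induction_on with
  | C a => exact ⟨0, C a, by ring, fun x => by rw [eval_C, eval_C]⟩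
  | add p q hp hq =>
    obtain ⟨Qp, Pp, hp, hPp⟩ := hp
    obtain ⟨Qq, Pq, hq, hPq⟩ := hq
    exact ⟨Qp + Qq, Pp + Pq, by rw [hp, hq]; ring, fun x => by rw [map_add, map_add, hPp, hPq]⟩
  | mul_X p j hp =>
    by_cases hij : j = i
    · subst hij
      exact ⟨p, 0, by ring, fun x => by
        rw [map_mul, eval_X, Function.update_self, mul_zero, map_zero]⟩
    · obtain ⟨Q, P₀, hp, hP₀⟩ := hp
      exact ⟨Q * X j, P₀ * X j, by rw [hp]; ring, fun x => by
        rw [map_mul, map_mul, hP₀, eval_X, eval_X, Function.update_of_ne hij]⟩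

lemma X_dvd_of_eval_eq_zero [CommRing R] [IsDomain R] [Infinite R] (i : σ)
    {P : MvPolynomial σ R} (h : ∀ x, x i = 0 → eval x P = 0) : X i ∣ P := by
  classical
  obtain ⟨Q, P₀, hP, hP₀⟩ := exists_eq_X_mul_add_eval_update i P
  obtain rfl : P₀ = 0 := MvPolynomial.funext fun x => by
    rw [hP₀, h _ (Function.update_self i 0 x), map_zero]
  exact ⟨Q, by rw [hP, add_zero]⟩

/-- Distinct variables are non-associated primes, so divisibility by each gives divisibility by
their product. -/
lemma prod_X_dvd_of_eval_eq_zero [Field R] [Infinite R] (s : Finset σ)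
    {P : MvPolynomial σ R} (h : ∀ x, ∀ i ∈ s, x i = 0 → eval x P = 0) :
    (∏ i ∈ s, X i) ∣ P := by
  refine Finset.prod_dvd_of_isRelPrime (fun i _ j _ hij => ?_)
    fun i hi => X_dvd_of_eval_eq_zero i fun x hx => h x i hi hx
  exact (X_prime.irreducible.isRelPrime_iff_not_dvd).mpr (X_dvd_X.not.mpr hij)

lemma isHomogeneous_prod_X [CommSemiring R] (s : Finset σ) :
    (∏ i ∈ s, (X i : MvPolynomial σ R)).IsHomogeneous s.card := by
  simpa using IsHomogeneous.prod s (fun i => (X i : MvPolynomial σ R)) (fun _ => 1)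
    fun i _ => isHomogeneous_X R i

attribute [local instance] MvPolynomial.gradedAlgebra in
lemma homogeneousComponent_add_mul_of_isHomogeneous [CommSemiring R] {p : MvPolynomial σ R}
    {m : ℕ} (hp : p.IsHomogeneous m) (n : ℕ) (q : MvPolynomial σ R) :
    homogeneousComponent (m + n) (p * q) = p * homogeneousComponent n q := by
  have h := DirectSum.coe_decompose_mul_of_left_mem_of_le (𝒜 := homogeneousSubmodule σ R)
    (b := q) hp (Nat.le_add_right m n)
  rw [Nat.add_sub_cancel_left] at h
  rw [← decomposition.decompose'_apply, ← decomposition.decompose'_apply]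
  exact h

end Polynomial

section PolynomialForms

open MvPolynomial

variable {N k l r : ℕ}

lemma homPolyForm_sum_smul {ι : Type*} [Fintype ι] (Q : ι → MvPolynomial (Fin N) ℝ)
    (hQ : ∀ a, (Q a).IsHomogeneous r) (ω : ι → Vec N [⋀^Fin k]→ₗ[ℝ] ℝ) :
    HomPolyForm r fun x => ∑ a, eval x (Q a) • ω a := fun v =>
  ⟨∑ a, C (ω a v) * Q a, IsHomogeneous.sum _ _ _ fun a _ => (hQ a).C_mul _,
    fun x => by simp [alternatingMap_sum_apply, mul_comm]⟩

lemma homPolyForm_hodge (hkl : k + l = N) {β : Form N k} (hβ : HomPolyForm r β) :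
    HomPolyForm (r + k) fun x => hodge hkl x (β x) := by
  choose q hq_hom hq using fun S : KSubset N k => hβ (basisTuple S)
  let P S : MvPolynomial (Fin N) ℝ := C (shuffleSign hkl S) * ((∏ i ∈ S.1, X i) * q S)
  have hP_hom S : (P S).IsHomogeneous (r + k) := by
    rw [add_comm, ← S.2]
    exact ((isHomogeneous_prod_X S.1).mul (hq_hom S)).C_mul _
  have hP x S : eval x (P S) = starCoeff hkl x (β x) S := by
    simp [P, starCoeff, hq]
  have hform : (fun x => hodge hkl x (β x)) =
      fun x => ∑ T, eval x (P ((complEquiv hkl).symm T)) • dx T :=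
    funext fun x => by simp only [hodge_eq_starFormula, starFormula, hP]
  rw [hform]
  exact homPolyForm_sum_smul _ (fun T => hP_hom _) dx

lemma exists_hodge_eq (hkl : k + l = N) {η : Form N l} (hη : HomPolyForm (r + k) η)
    (hface : ∀ (i : Fin N) (x : Vec N), x i = 0 → faceRestrict i (η x) = 0) :
    ∃ β : Form N k, HomPolyForm r β ∧ ∀ x, hodge hkl x (β x) = η x := by
  choose P hP_hom hP using fun S : KSubset N k => hη (basisTuple (complEquiv hkl S))
  have hdvd S : (∏ i ∈ S.1, X i) ∣ P S := by
    refine prod_X_dvd_of_eval_eq_zero S.1 fun x i hi hxi => ?_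
    rw [hP]
    exact DFunLike.congr_fun (hface i x hxi) fun j =>
      ⟨basisTuple _ j, basisTuple_apply_of_notMem
        (show i ∉ (complEquiv hkl S).1 from Finset.notMem_compl.mpr hi) j⟩
  choose q hq using hdvd
  have hPq S : (∏ i ∈ S.1, X i) * homogeneousComponent r (q S) = P S := by
    have h := homogeneousComponent_add_mul_of_isHomogeneous (isHomogeneous_prod_X S.1) r (q S)
    rwa [S.2, Nat.add_comm k r, ← hq, homogeneousComponent_of_mem (hP_hom S), if_pos rfl,
      eq_comm] at h
  refine ⟨fun x => ∑ S, eval x (C (shuffleSign hkl S) * homogeneousComponent r (q S)) • dx S,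
    homPolyForm_sum_smul _ (fun S => (homogeneousComponent_isHomogeneous r _).C_mul _) dx,
    fun x => ext_basisTuple fun T => ?_⟩
  obtain ⟨S, rfl⟩ := (complEquiv hkl).surjective T
  rw [hodge_apply_basisTuple, starCoeff, sum_smul_dx_apply_basisTuple, ← hP, ← hPq]
  simp only [map_mul, eval_C, eval_prod, eval_X]
  linear_combination (∏ i ∈ S.1, x i) * eval x (homogeneousComponent r (q S)) *
    shuffleSign_mul_self hkl S

lemma eq_of_hodge_eq (hkl : k + l = N) {β β' : Form N k} (hβ : HomPolyForm r β)
    (hβ' : HomPolyForm r β') (h : ∀ x, hodge hkl x (β x) = hodge hkl x (β' x)) : β = β' := by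
  suffices hS : ∀ S x, β x (basisTuple S) = β' x (basisTuple S) from
    funext fun x => ext_basisTuple fun S => hS S x
  intro S
  obtain ⟨Q, -, hQ⟩ := hβ (basisTuple S)
  obtain ⟨Q', -, hQ'⟩ := hβ' (basisTuple S)
  have hXQ : (∏ i ∈ S.1, X i) * Q = (∏ i ∈ S.1, X i) * Q' := MvPolynomial.funext fun x => by
    have hx := DFunLike.congr_fun (h x) (basisTuple (complEquiv hkl S))
    rw [hodge_apply_basisTuple, hodge_apply_basisTuple, starCoeff, starCoeff,
      mul_right_inj' (shuffleSign_ne_zero hkl S)] at hx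
    simpa [eval_prod, hQ, hQ'] using hx
  have hQQ' := mul_left_cancel₀ (Finset.prod_ne_zero_iff.mpr fun i _ => X_ne_zero i) hXQ
  exact fun x => by rw [← hQ, ← hQ', hQQ']

end PolynomialForms

/-- `*_g` maps `H_r Λᵏ` (forms with homogeneous polynomial coefficients of degree `r`)
isomorphically onto `H̊_{r+k} Λ^{n+1−k}` (forms with homogeneous polynomial coefficients of
degree `r+k` with vanishing pullback to every hyperplane `{xᵢ = 0}`): it lands in that
space, it is surjective onto it, and it is injective. -/
theorem stmt18 (n k l r : ℕ) (h : k + l = n + 1) :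
    (∀ β : Form (n + 1) k, HomPolyForm r β →
        HomPolyForm (r + k) (fun x => hodge h x (β x))
        ∧ ∀ (i : Fin (n + 1)) (x : Vec (n + 1)), x i = 0 →
            faceRestrict i (hodge h x (β x)) = 0)
    ∧ (∀ η : Form (n + 1) l, HomPolyForm (r + k) η →
        (∀ (i : Fin (n + 1)) (x : Vec (n + 1)), x i = 0 → faceRestrict i (η x) = 0) →
        ∃ β : Form (n + 1) k, HomPolyForm r β ∧ ∀ x, hodge h x (β x) = η x)
    ∧ (∀ β β' : Form (n + 1) k, HomPolyForm r β → HomPolyForm r β' →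
        (∀ x, hodge h x (β x) = hodge h x (β' x)) → β = β') :=
  ⟨fun β hβ => ⟨homPolyForm_hodge h hβ, fun i x hx => faceRestrict_hodge_eq_zero h x (β x) i hx⟩,
    fun _ hη hface => exists_hodge_eq h hη hface,
    fun _ _ hβ hβ' hββ' => eq_of_hodge_eq h hβ hβ' hββ'⟩

end FEEC
end
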